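/- arXiv:math/0305189 — 13 statements merged into one kernel-verified Lean document; each statement's English description precedes it below -/
import Mathlib

section
/- Let H be a complex Hilbert space, A a bounded self-adjoint operator on H, and λ₀ ≤ 0 a real number with Re⟨Au,u⟩ ≥ λ₀‖u‖² for all u ∈ H. Let J and J' be bounded self-adjoint operators on H with 0 ≤ Re⟨Ju,u⟩ ≤ ‖u‖² for all u, and J∘J + J'∘J' = 1. Let γ ≥ 0 satisfy ‖[J,[J,A]]‖ ≤ γ and ‖[J',[J',A]]‖ ≤ γ, and let α > 0 satisfy Re⟨A(J'u),J'u⟩ ≥ α‖J'u‖² for all u ∈ H. Let E be an orthogonal projection on H (a self-adjoint idempotent bounded operator) such that Re⟨A(Eu),Eu⟩ ≤ λ‖Eu‖² for all u ∈ H, where λ is a real number. If α > λ + γ, then for every u ∈ H one has ‖J(Eu)‖² ≥ ((α−λ−γ)/(α−λ₀))·‖Eu‖². -/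
/-!
With `J² + J'² = 1`, expanding the double commutators gives the IMS localization formula
`2A = 2(JAJ + J'AJ') + [J,[J,A]] + [J',[J',A]]`. Testing it against `v = Eu` yields
`λ‖v‖² ≥ ⟨AJv, Jv⟩ + ⟨AJ'v, J'v⟩ - γ‖v‖² ≥ λ₀‖Jv‖² + α‖J'v‖² - γ‖v‖²`, and substituting
`‖J'v‖² = ‖v‖² - ‖Jv‖²` leaves `(α - λ₀)‖Jv‖² ≥ (α - λ - γ)‖v‖²`.
-/

open RCLike
open scoped InnerProductSpace

theorem ims_localization_formula {R : Type*} [Ring R] {J J' : R} (h : J * J + J' * J' = 1)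
    (A : R) : 2 • (J * A * J + J' * A * J') + (⁅J, ⁅J, A⁆⁆ + ⁅J', ⁅J', A⁆⁆) = 2 • A := by
  have key : 2 • (J * A * J + J' * A * J') + (⁅J, ⁅J, A⁆⁆ + ⁅J', ⁅J', A⁆⁆) =
      (J * J + J' * J') * A + A * (J * J + J' * J') := by
    simp only [Ring.lie_def]
    noncomm_ring
  rwa [h, one_mul, mul_one, ← two_nsmul] at key

section

variable {𝕜 E : Type*} [RCLike 𝕜] [NormedAddCommGroup E] [InnerProductSpace 𝕜 E]

theorem LinearMap.IsSymmetric.inner_mul_mul_apply {J : E →L[𝕜] E}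
    (hJ : (J : E →ₗ[𝕜] E).IsSymmetric) (A : E →L[𝕜] E) (v : E) :
    ⟪(J * A * J) v, v⟫_𝕜 = ⟪A (J v), J v⟫_𝕜 :=
  hJ (A (J v)) v

theorem LinearMap.IsSymmetric.re_inner_mul_self_apply {J : E →L[𝕜] E}
    (hJ : (J : E →ₗ[𝕜] E).IsSymmetric) (v : E) :
    re ⟪(J * J) v, v⟫_𝕜 = ‖J v‖ ^ 2 := by
  rw [← inner_self_eq_norm_sq (𝕜 := 𝕜)]
  exact congrArg re (hJ (J v) v)

theorem norm_sq_add_norm_sq_of_mul_self_add_mul_self_eq_one {J J' : E →L[𝕜] E}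
    (hJ : (J : E →ₗ[𝕜] E).IsSymmetric) (hJ' : (J' : E →ₗ[𝕜] E).IsSymmetric)
    (h : J * J + J' * J' = 1) (v : E) : ‖J v‖ ^ 2 + ‖J' v‖ ^ 2 = ‖v‖ ^ 2 := by
  have hv : re ⟪(J * J + J' * J') v, v⟫_𝕜 = ‖v‖ ^ 2 := by
    rw [h, one_apply_eq_self, inner_self_eq_norm_sq]
  rwa [add_apply, inner_add_left, map_add, hJ.re_inner_mul_self_apply,
    hJ'.re_inner_mul_self_apply] at hv

theorem ContinuousLinearMap.neg_opNorm_mul_sq_le_re_inner_apply_self (C : E →L[𝕜] E) (v : E) :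
    -(‖C‖ * ‖v‖ ^ 2) ≤ re ⟪C v, v⟫_𝕜 := by
  refine neg_le_of_abs_le ?_
  calc |re ⟪C v, v⟫_𝕜| ≤ ‖C v‖ * ‖v‖ := (abs_re_le_norm _).trans (norm_inner_le_norm _ _)
    _ ≤ ‖C‖ * ‖v‖ * ‖v‖ := by gcongr; exact C.le_opNorm v
    _ = ‖C‖ * ‖v‖ ^ 2 := by ring

theorem re_inner_localized_sub_le_re_inner_apply_self {J J' : E →L[𝕜] E}
    (hJ : (J : E →ₗ[𝕜] E).IsSymmetric) (hJ' : (J' : E →ₗ[𝕜] E).IsSymmetric)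
    (h : J * J + J' * J' = 1) (A : E →L[𝕜] E) (v : E) :
    re ⟪A (J v), J v⟫_𝕜 + re ⟪A (J' v), J' v⟫_𝕜
      - (‖⁅J, ⁅J, A⁆⁆‖ + ‖⁅J', ⁅J', A⁆⁆‖) / 2 * ‖v‖ ^ 2 ≤ re ⟪A v, v⟫_𝕜 := by
  have hims := congrArg (fun T : E →L[𝕜] E => re ⟪T v, v⟫_𝕜) (ims_localization_formula h A)
  simp only [two_nsmul, add_apply, inner_add_left,
    map_add, hJ.inner_mul_mul_apply, hJ'.inner_mul_mul_apply] at hims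
  have hC := ContinuousLinearMap.neg_opNorm_mul_sq_le_re_inner_apply_self ⁅J, ⁅J, A⁆⁆ v
  have hC' := ContinuousLinearMap.neg_opNorm_mul_sq_le_re_inner_apply_self ⁅J', ⁅J', A⁆⁆ v
  linarith

theorem mul_norm_sq_le_mul_norm_sq_of_localized {A J J' : E →L[𝕜] E}
    (hJ : (J : E →ₗ[𝕜] E).IsSymmetric) (hJ' : (J' : E →ₗ[𝕜] E).IsSymmetric)
    (h : J * J + J' * J' = 1) {lam₀ γ α lam : ℝ}
    (hAlow : ∀ u : E, lam₀ * ‖u‖ ^ 2 ≤ re ⟪A u, u⟫_𝕜)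
    (hcommJ : ‖⁅J, ⁅J, A⁆⁆‖ ≤ γ) (hcommJ' : ‖⁅J', ⁅J', A⁆⁆‖ ≤ γ)
    (hAJ' : ∀ u : E, α * ‖J' u‖ ^ 2 ≤ re ⟪A (J' u), J' u⟫_𝕜)
    {v : E} (hv : re ⟪A v, v⟫_𝕜 ≤ lam * ‖v‖ ^ 2) :
    (α - lam - γ) * ‖v‖ ^ 2 ≤ (α - lam₀) * ‖J v‖ ^ 2 := by
  have hims := re_inner_localized_sub_le_re_inner_apply_self hJ hJ' h A v
  have hJ'v : ‖J' v‖ ^ 2 = ‖v‖ ^ 2 - ‖J v‖ ^ 2 := by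
    linarith [norm_sq_add_norm_sq_of_mul_self_add_mul_self_eq_one hJ hJ' h v]
  have hcomm : (‖⁅J, ⁅J, A⁆⁆‖ + ‖⁅J', ⁅J', A⁆⁆‖) / 2 * ‖v‖ ^ 2 ≤ γ * ‖v‖ ^ 2 := by
    gcongr
    linarith
  have hαJ' := hAJ' v
  rw [hJ'v] at hαJ'
  linarith [hAlow (J v)]

end

theorem localization_lower_bound_general {H : Type*} [NormedAddCommGroup H]
    [InnerProductSpace ℂ H] [CompleteSpace H]
    (A J J' E : H →L[ℂ] H)
    (lam₀ : ℝ) (hlam₀ : lam₀ ≤ 0)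
    (hAlow : ∀ u : H, lam₀ * ‖u‖ ^ 2 ≤ (inner ℂ (A u) u).re)
    (hJ : IsSelfAdjoint J) (hJ' : IsSelfAdjoint J')
    (hJJ' : J * J + J' * J' = 1)
    (γ : ℝ)
    (hcommJ : ‖⁅J, ⁅J, A⁆⁆‖ ≤ γ) (hcommJ' : ‖⁅J', ⁅J', A⁆⁆‖ ≤ γ)
    (α : ℝ) (hα : 0 < α)
    (hAJ' : ∀ u : H, α * ‖J' u‖ ^ 2 ≤ (inner ℂ (A (J' u)) (J' u)).re)
    (lam : ℝ)
    (hAE : ∀ u : H, (inner ℂ (A (E u)) (E u)).re ≤ lam * ‖E u‖ ^ 2) :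
    ∀ u : H, ((α - lam - γ) / (α - lam₀)) * ‖E u‖ ^ 2 ≤ ‖J (E u)‖ ^ 2 := by
  intro u
  rw [div_mul_eq_mul_div, div_le_iff₀ (by linarith), mul_comm _ (α - lam₀)]
  exact mul_norm_sq_le_mul_norm_sq_of_localized hJ.isSymmetric hJ'.isSymmetric hJJ' hAlow
    hcommJ hcommJ' hAJ' (hAE u)

/-- **Localization estimate for spectral projections** (Proposition on localization).
If `A` is self-adjoint with `Re⟨Au,u⟩ ≥ λ₀‖u‖²`, `J, J'` are self-adjoint with
`0 ≤ Re⟨Ju,u⟩ ≤ ‖u‖²` and `J² + J'² = 1`, the double commutators `[J,[J,A]]` and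
`[J',[J',A]]` have norm at most `γ`, `Re⟨A J'u, J'u⟩ ≥ α‖J'u‖²`, and `E` is an orthogonal
projection with `Re⟨A Eu, Eu⟩ ≤ λ‖Eu‖²`, then `α > λ + γ` implies
`‖J(Eu)‖² ≥ ((α−λ−γ)/(α−λ₀))‖Eu‖²` for all `u`. -/
theorem localization_lower_bound {H : Type*} [NormedAddCommGroup H]
    [InnerProductSpace ℂ H] [CompleteSpace H]
    (A J J' E : H →L[ℂ] H)
    (hA : IsSelfAdjoint A)
    (lam₀ : ℝ) (hlam₀ : lam₀ ≤ 0)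
    (hAlow : ∀ u : H, lam₀ * ‖u‖ ^ 2 ≤ (inner ℂ (A u) u).re)
    (hJ : IsSelfAdjoint J) (hJ' : IsSelfAdjoint J')
    (hJ0 : ∀ u : H, 0 ≤ (inner ℂ (J u) u).re)
    (hJ1 : ∀ u : H, (inner ℂ (J u) u).re ≤ ‖u‖ ^ 2)
    (hJJ' : J * J + J' * J' = 1)
    (γ : ℝ) (hγ : 0 ≤ γ)
    (hcommJ : ‖⁅J, ⁅J, A⁆⁆‖ ≤ γ) (hcommJ' : ‖⁅J', ⁅J', A⁆⁆‖ ≤ γ)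
    (α : ℝ) (hα : 0 < α)
    (hAJ' : ∀ u : H, α * ‖J' u‖ ^ 2 ≤ (inner ℂ (A (J' u)) (J' u)).re)
    (hEproj : E * E = E) (hEsa : IsSelfAdjoint E)
    (lam : ℝ)
    (hAE : ∀ u : H, (inner ℂ (A (E u)) (E u)).re ≤ lam * ‖E u‖ ^ 2)
    (hgap : α > lam + γ) :
    ∀ u : H, ((α - lam - γ) / (α - lam₀)) * ‖E u‖ ^ 2 ≤ ‖J (E u)‖ ^ 2 :=
  localization_lower_bound_general A J J' E lam₀ hlam₀ hAlow hJ hJ' hJJ' γ hcommJ hcommJ' α hα hAJ'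
    lam hAE
end

section
/- Let H be a complex Hilbert space, A a bounded self-adjoint operator on H, and λ₀ ≤ 0 a real number with Re⟨Au,u⟩ ≥ λ₀‖u‖² for all u ∈ H. Let J and J' be bounded self-adjoint operators on H with 0 ≤ Re⟨Ju,u⟩ ≤ ‖u‖² for all u, and J∘J + J'∘J' = 1. Let γ ≥ 0 satisfy ‖[J,[J,A]]‖ ≤ γ and ‖[J',[J',A]]‖ ≤ γ, and let α > 0 satisfy Re⟨A(J'u),J'u⟩ ≥ α‖J'u‖² for all u ∈ H. Let E be an orthogonal projection on H such that Re⟨A(Eu),Eu⟩ ≤ λ‖Eu‖² for all u ∈ H, where λ is a real number. If α > λ + γ, then for every u ∈ H one has Re⟨A(J(Eu)), J(Eu)⟩ ≤ (λ + γ − λ₀·(λ+γ−λ₀)/(α−λ₀))·‖Eu‖². -/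
/-!
The IMS localization formula `A = JAJ + J'AJ' + ([J,[J,A]] + [J',[J',A]]) / 2`, valid whenever
`J² + J'² = 1`, gives `⟨AJv, Jv⟩ + ⟨AJ'v, J'v⟩ ≤ ⟨Av, v⟩ + γ‖v‖²`. For `v = Eu` the term
`⟨AJ'v, J'v⟩ ≥ α‖J'v‖²` is nonnegative and `⟨Av, v⟩ ≤ λ‖v‖²`, so `⟨AJv, Jv⟩ ≤ (λ + γ)‖v‖²`.
This already implies the claim: `λ₀‖v‖² ≤ ⟨Av, v⟩ ≤ λ‖v‖²` gives `(λ + γ - λ₀)‖v‖² ≥ 0`, and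
with `λ₀ ≤ 0 < α` the correction `-λ₀ (λ + γ - λ₀)‖v‖² / (α - λ₀)` is nonnegative.
-/

open RCLike

theorem lie_lie_add_lie_lie_of_mul_self_add_mul_self_eq_one {R : Type*} [Ring R] {J J' : R}
    (hJJ' : J * J + J' * J' = 1) (A : R) :
    ⁅J, ⁅J, A⁆⁆ + ⁅J', ⁅J', A⁆⁆ = 2 • A - 2 • (J * A * J + J' * A * J') := by
  have h : ⁅J, ⁅J, A⁆⁆ + ⁅J', ⁅J', A⁆⁆
      = (J * J + J' * J') * A + A * (J * J + J' * J') - 2 • (J * A * J + J' * A * J') := by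
    simp only [Ring.lie_def]; noncomm_ring
  rw [h, hJJ']; noncomm_ring

section

variable {𝕜 E : Type*} [RCLike 𝕜] [NormedAddCommGroup E] [InnerProductSpace 𝕜 E]

local notation "⟪" x ", " y "⟫" => inner 𝕜 x y

theorem ContinuousLinearMap.abs_re_inner_apply_self_le (T : E →L[𝕜] E) (x : E) :
    |re ⟪T x, x⟫| ≤ ‖T‖ * ‖x‖ ^ 2 := by
  grw [abs_re_le_norm, norm_inner_le_norm, le_opNorm, mul_assoc, ← sq]

variable [CompleteSpace E]

theorem re_inner_conj_add_re_inner_conj_of_mul_self_add_mul_self_eq_one {A J J' : E →L[𝕜] E}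
    (hJ : IsSelfAdjoint J) (hJ' : IsSelfAdjoint J') (hJJ' : J * J + J' * J' = 1) (x : E) :
    re ⟪A (J x), J x⟫ + re ⟪A (J' x), J' x⟫ =
      re ⟪A x, x⟫ - (re ⟪⁅J, ⁅J, A⁆⁆ x, x⟫ + re ⟪⁅J', ⁅J', A⁆⁆ x, x⟫) / 2 := by
  have h := congrArg (fun T : E →L[𝕜] E ↦ re ⟪T x, x⟫)
    (lie_lie_add_lie_lie_of_mul_self_add_mul_self_eq_one hJJ' A)
  have hJx : ⟪J (A (J x)), x⟫ = ⟪A (J x), J x⟫ := hJ.isSymmetric _ _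
  have hJ'x : ⟪J' (A (J' x)), x⟫ = ⟪A (J' x), J' x⟫ := hJ'.isSymmetric _ _
  simp only [add_apply, sub_apply, mul_apply_eq_comp, two_nsmul,
    inner_add_left, inner_sub_left, map_add, map_sub, hJx, hJ'x] at h
  linarith

theorem re_inner_apply_self_localized_le {A J J' : E →L[𝕜] E}
    (hJ : IsSelfAdjoint J) (hJ' : IsSelfAdjoint J') (hJJ' : J * J + J' * J' = 1) {γ lam : ℝ}
    (hcommJ : ‖⁅J, ⁅J, A⁆⁆‖ ≤ γ) (hcommJ' : ‖⁅J', ⁅J', A⁆⁆‖ ≤ γ) {x : E}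
    (hAJ' : 0 ≤ re ⟪A (J' x), J' x⟫) (hAx : re ⟪A x, x⟫ ≤ lam * ‖x‖ ^ 2) :
    re ⟪A (J x), J x⟫ ≤ (lam + γ) * ‖x‖ ^ 2 := by
  have h_lower {T : E →L[𝕜] E} (hT : ‖T‖ ≤ γ) : -(γ * ‖x‖ ^ 2) ≤ re ⟪T x, x⟫ :=
    calc -(γ * ‖x‖ ^ 2) ≤ -(‖T‖ * ‖x‖ ^ 2) := by gcongr
      _ ≤ re ⟪T x, x⟫ := neg_le_of_abs_le (T.abs_re_inner_apply_self_le x)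
  have hIMS :=
    re_inner_conj_add_re_inner_conj_of_mul_self_add_mul_self_eq_one (A := A) hJ hJ' hJJ' x
  linarith [h_lower hcommJ, h_lower hcommJ']

end

theorem localization_energy_bound_general {H : Type*} [NormedAddCommGroup H]
    [InnerProductSpace ℂ H] [CompleteSpace H]
    (A J J' E : H →L[ℂ] H)
    (lam₀ : ℝ) (hlam₀ : lam₀ ≤ 0)
    (hAlow : ∀ u : H, lam₀ * ‖u‖ ^ 2 ≤ (inner ℂ (A u) u : ℂ).re)
    (hJ : IsSelfAdjoint J) (hJ' : IsSelfAdjoint J')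
    (hJJ' : J * J + J' * J' = 1)
    (γ : ℝ) (hγ : 0 ≤ γ)
    (hcommJ : ‖⁅J, ⁅J, A⁆⁆‖ ≤ γ) (hcommJ' : ‖⁅J', ⁅J', A⁆⁆‖ ≤ γ)
    (α : ℝ) (hα : 0 < α)
    (hAJ' : ∀ u : H, α * ‖J' u‖ ^ 2 ≤ (inner ℂ (A (J' u)) (J' u) : ℂ).re)
    (lam : ℝ)
    (hAE : ∀ u : H, (inner ℂ (A (E u)) (E u) : ℂ).re ≤ lam * ‖E u‖ ^ 2) :
    ∀ u : H, (inner ℂ (A (J (E u))) (J (E u)) : ℂ).re ≤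
      (lam + γ - lam₀ * ((lam + γ - lam₀) / (α - lam₀))) * ‖E u‖ ^ 2 := by
  intro u
  set v := E u
  have hJv : (inner ℂ (A (J v)) (J v)).re ≤ (lam + γ) * ‖v‖ ^ 2 :=
    re_inner_apply_self_localized_le hJ hJ' hJJ' hcommJ hcommJ'
      ((by positivity : 0 ≤ α * ‖J' v‖ ^ 2).trans (hAJ' v)) (hAE u)
  have hspread : 0 ≤ (lam + γ - lam₀) * ‖v‖ ^ 2 := by nlinarith [hAlow v, hAE u]
  have hcorr : 0 ≤ -lam₀ / (α - lam₀) * ((lam + γ - lam₀) * ‖v‖ ^ 2) :=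
    mul_nonneg (div_nonneg (by linarith) (by linarith)) hspread
  calc (inner ℂ (A (J v)) (J v)).re ≤ (lam + γ) * ‖v‖ ^ 2 := hJv
    _ ≤ (lam + γ) * ‖v‖ ^ 2 + -lam₀ / (α - lam₀) * ((lam + γ - lam₀) * ‖v‖ ^ 2) :=
      le_add_of_nonneg_right hcorr
    _ = (lam + γ - lam₀ * ((lam + γ - lam₀) / (α - lam₀))) * ‖v‖ ^ 2 := by ring

/-- **Localization estimate for spectral projections** (Proposition on localization).
If `A` is self-adjoint with `Re⟨Au,u⟩ ≥ λ₀‖u‖²`, `J, J'` are self-adjoint with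
`0 ≤ Re⟨Ju,u⟩ ≤ ‖u‖²` and `J² + J'² = 1`, the double commutators `[J,[J,A]]` and
`[J',[J',A]]` have norm at most `γ`, `Re⟨A J'u, J'u⟩ ≥ α‖J'u‖²`, and `E` is an orthogonal
projection with `Re⟨A Eu, Eu⟩ ≤ λ‖Eu‖²`, then `α > λ + γ` implies
`Re⟨A(J(Eu)), J(Eu)⟩ ≤ (λ+γ−λ₀(λ+γ−λ₀)/(α−λ₀))‖Eu‖²` for all `u`. -/
theorem localization_energy_bound {H : Type*} [NormedAddCommGroup H]
    [InnerProductSpace ℂ H] [CompleteSpace H]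
    (A J J' E : H →L[ℂ] H)
    (hA : IsSelfAdjoint A)
    (lam₀ : ℝ) (hlam₀ : lam₀ ≤ 0)
    (hAlow : ∀ u : H, lam₀ * ‖u‖ ^ 2 ≤ (inner ℂ (A u) u : ℂ).re)
    (hJ : IsSelfAdjoint J) (hJ' : IsSelfAdjoint J')
    (hJ0 : ∀ u : H, 0 ≤ (inner ℂ (J u) u : ℂ).re)
    (hJ1 : ∀ u : H, (inner ℂ (J u) u : ℂ).re ≤ ‖u‖ ^ 2)
    (hJJ' : J * J + J' * J' = 1)
    (γ : ℝ) (hγ : 0 ≤ γ)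
    (hcommJ : ‖⁅J, ⁅J, A⁆⁆‖ ≤ γ) (hcommJ' : ‖⁅J', ⁅J', A⁆⁆‖ ≤ γ)
    (α : ℝ) (hα : 0 < α)
    (hAJ' : ∀ u : H, α * ‖J' u‖ ^ 2 ≤ (inner ℂ (A (J' u)) (J' u) : ℂ).re)
    (hEproj : E * E = E) (hEsa : IsSelfAdjoint E)
    (lam : ℝ)
    (hAE : ∀ u : H, (inner ℂ (A (E u)) (E u) : ℂ).re ≤ lam * ‖E u‖ ^ 2)
    (hgap : α > lam + γ) :
    ∀ u : H, (inner ℂ (A (J (E u))) (J (E u)) : ℂ).re ≤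
      (lam + γ - lam₀ * ((lam + γ - lam₀) / (α - lam₀))) * ‖E u‖ ^ 2 :=
  localization_energy_bound_general A J J' E lam₀ hlam₀ hAlow hJ hJ' hJJ' γ hγ hcommJ hcommJ' α hα
    hAJ' lam hAE
end

section
/- Let H₀, H₁, H₂ be complex Hilbert spaces; let i₁ : H₀ → H₁, i₂ : H₀ → H₂ and p₁ : H₁ → H₀ be bounded linear maps with p₁∘i₁ = id on H₀; let J be a bounded self-adjoint operator on H₀; set J₁ = i₁∘J∘p₁ and let J₁' be a bounded self-adjoint operator on H₁ such that J₁ is self-adjoint, 0 ≤ Re⟨J₁u,u⟩ ≤ ‖u‖² for all u, and J₁∘J₁ + J₁'∘J₁' = 1. Let A₁, A₂ be bounded self-adjoint operators on H₁, H₂ respectively and let real constants λ₀₁ ≤ 0, λ₀₂ ≤ 0, λ₁, λ₂, γ₁ ≥ 0, α₁ > 0, β₁ ≥ 1, ε₁ > 0, ρ > 1 satisfy: (i) Re⟨A₁u,u⟩ ≥ λ₀₁‖u‖² for all u ∈ H₁ and Re⟨A₂v,v⟩ ≥ λ₀₂‖v‖² for all v ∈ H₂; (ii) ‖[J₁,[J₁,A₁]]‖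 ≤ γ₁ and ‖[J₁',[J₁',A₁]]‖ ≤ γ₁; (iii) Re⟨A₁(J₁'u),J₁'u⟩ ≥ α₁‖J₁'u‖² for all u ∈ H₁; (iv) ρ⁻¹‖i₂(Ju)‖² ≤ ‖i₁(Ju)‖² ≤ ρ‖i₂(Ju)‖² for all u ∈ H₀; (v) Re⟨A₂(i₂(Ju)),i₂(Ju)⟩ ≤ β₁·Re⟨A₁(i₁(Ju)),i₁(Ju)⟩ + ε₁‖i₁(Ju)‖² for all u ∈ H₀. Let E₁ be an orthogonal projection on H₁ with Re⟨A₁(E₁u),E₁u⟩ ≤ λ₁‖E₁u‖² for all u ∈ H₁, and let E₂ be an orthogonal projection on H₂ commuting with A₂ such that Re⟨A₂((1−E₂)v),(1−E₂)v⟩ ≥ λ₂‖(1−E₂)v‖² for all v ∈ H₂. Assume α₁ > λ₁ + γ₁, λ₂ > λ₀₂ and λ₂ ≥ ρ·ε₁. Then for every u ∈ H₁ one has ‖E₂(i₂(J(p₁(E₁u))))‖² ≥ ε₀·‖E₁u‖², where ε₀ = (λ₂−λ₀₂)⁻¹·[ (λ₂ρ⁻¹−ε₁)·(α₁−λ₁−γ₁)/(α₁−λ₀₁)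 − β₁·(λ₁+γ₁ − λ₀₁·(λ₁+γ₁−λ₀₁)/(α₁−λ₀₁)) ]. Moreover, if λ₂ > ρ·[β₁·(λ₁+γ₁+(λ₁+γ₁−λ₀₁)²/(α₁−λ₁−γ₁)) + ε₁], then ε₀ > 0. -/
/-!
For `v = E₁ u`, the IMS localization formula
`2 A₁ = 2 (J₁ A₁ J₁ + J₁' A₁ J₁') + ⁅J₁, ⁅J₁, A₁⁆⁆ + ⁅J₁', ⁅J₁', A₁⁆⁆` bounds the sum of the
energies of `J₁ v` and `J₁' v` by `(λ₁ + γ₁) ‖v‖²`. As `‖J₁ v‖² + ‖J₁' v‖² = ‖v‖²` and `A₁ ≥ α₁`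
on the range of `J₁'`, a fixed fraction `(α₁ - λ₁ - γ₁) / (α₁ - λ₀₁)` of the mass of `v` is carried
by `J₁ v = i₁ J p₁ v`, whose energy is bounded above. By (iv) and (v) the same holds, up to the
constants `ρ`, `β₁`, `ε₁`, for `w = i₂ J p₁ v`. Finally, since `E₂` commutes with `A₂`, the energy
of `w` splits over `E₂ w` and `(1 - E₂) w`; as `A₂ ≥ λ₂` on the second part and `A₂ ≥ λ₀₂` on the
first, a low energy of `w` forces `‖E₂ w‖²` to be large.
-/

open RCLike
open scoped InnerProductSpace

theorem two_smul_eq_ims_localization {R : Type*} [Ring R] {J J' : R} (h : J * J + J' * J' = 1)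
    (A : R) : 2 • A = 2 • (J * A * J + J' * A * J') + ⁅J, ⁅J, A⁆⁆ + ⁅J', ⁅J', A⁆⁆ := by
  have expand : 2 • (J * A * J + J' * A * J') + ⁅J, ⁅J, A⁆⁆ + ⁅J', ⁅J', A⁆⁆
      = A * (J * J + J' * J') + (J * J + J' * J') * A := by
    simp only [Ring.lie_def, two_smul]
    noncomm_ring
  rw [expand, h, mul_one, one_mul, two_smul]

section Localization

variable {𝕜 H : Type*} [RCLike 𝕜] [NormedAddCommGroup H] [InnerProductSpace 𝕜 H]

theorem neg_mul_sq_le_re_inner_of_opNorm_le {C : H →L[𝕜] H} {γ : ℝ} (hC : ‖C‖ ≤ γ) (v : H) :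
    -(γ * ‖v‖ ^ 2) ≤ re ⟪C v, v⟫_𝕜 := by
  have hbound : ‖⟪C v, v⟫_𝕜‖ ≤ γ * ‖v‖ ^ 2 := calc
    ‖⟪C v, v⟫_𝕜‖ ≤ ‖C v‖ * ‖v‖ := norm_inner_le_norm _ _
    _ ≤ ‖C‖ * ‖v‖ * ‖v‖ := by gcongr; exact C.le_opNorm v
    _ ≤ γ * ‖v‖ * ‖v‖ := by gcongr
    _ = γ * ‖v‖ ^ 2 := by ring
  linarith [neg_abs_le (re ⟪C v, v⟫_𝕜), abs_re_le_norm ⟪C v, v⟫_𝕜]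

variable [CompleteSpace H]

theorem IsSelfAdjoint.inner_mul_mul_self_apply {J : H →L[𝕜] H} (hJ : IsSelfAdjoint J)
    (A : H →L[𝕜] H) (v : H) : ⟪(J * A * J) v, v⟫_𝕜 = ⟪A (J v), J v⟫_𝕜 :=
  hJ.isSymmetric _ _

theorem norm_sq_add_norm_sq_of_mul_self_add_mul_self {J J' : H →L[𝕜] H} (hJ : IsSelfAdjoint J)
    (hJ' : IsSelfAdjoint J') (h : J * J + J' * J' = 1) (v : H) :
    ‖J v‖ ^ 2 + ‖J' v‖ ^ 2 = ‖v‖ ^ 2 := by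
  have hv := congrArg (fun T : H →L[𝕜] H => re ⟪T v, v⟫_𝕜) h
  have hsq {T : H →L[𝕜] H} (hT : IsSelfAdjoint T) : re ⟪(T * T) v, v⟫_𝕜 = ‖T v‖ ^ 2 := by
    have hT1 := hT.inner_mul_mul_self_apply 1 v
    rw [mul_one, one_apply_eq_self] at hT1
    rw [hT1, inner_self_eq_norm_sq]
  simpa only [add_apply, inner_add_left, map_add, hsq hJ, hsq hJ', one_apply_eq_self,
    inner_self_eq_norm_sq] using hv

theorem re_inner_localized_le {J J' A : H →L[𝕜] H} (hJ : IsSelfAdjoint J)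
    (hJ' : IsSelfAdjoint J') (h : J * J + J' * J' = 1) {γ : ℝ}
    (hC : ‖⁅J, ⁅J, A⁆⁆‖ ≤ γ) (hC' : ‖⁅J', ⁅J', A⁆⁆‖ ≤ γ) (v : H) :
    re ⟪A (J v), J v⟫_𝕜 + re ⟪A (J' v), J' v⟫_𝕜 ≤ re ⟪A v, v⟫_𝕜 + γ * ‖v‖ ^ 2 := by
  have hv := congrArg (fun T : H →L[𝕜] H => re ⟪T v, v⟫_𝕜) (two_smul_eq_ims_localization h A)
  simp only [two_smul, add_apply, inner_add_left, map_add,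
    hJ.inner_mul_mul_self_apply, hJ'.inner_mul_mul_self_apply] at hv
  linarith [neg_mul_sq_le_re_inner_of_opNorm_le hC v, neg_mul_sq_le_re_inner_of_opNorm_le hC' v]

theorem localized_norm_sq_ge_and_re_inner_le {J J' A : H →L[𝕜] H} (hJ : IsSelfAdjoint J)
    (hJ' : IsSelfAdjoint J') (h : J * J + J' * J' = 1) {lam₀ lam γ α : ℝ} (hlam₀ : lam₀ ≤ 0)
    (hα : lam₀ < α) (hlow : ∀ x, lam₀ * ‖x‖ ^ 2 ≤ re ⟪A x, x⟫_𝕜)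
    (hout : ∀ x, α * ‖J' x‖ ^ 2 ≤ re ⟪A (J' x), J' x⟫_𝕜)
    (hC : ‖⁅J, ⁅J, A⁆⁆‖ ≤ γ) (hC' : ‖⁅J', ⁅J', A⁆⁆‖ ≤ γ) {v : H}
    (hv : re ⟪A v, v⟫_𝕜 ≤ lam * ‖v‖ ^ 2) :
    (α - lam - γ) / (α - lam₀) * ‖v‖ ^ 2 ≤ ‖J v‖ ^ 2 ∧
      re ⟪A (J v), J v⟫_𝕜 ≤ (lam + γ - lam₀ * ((lam + γ - lam₀) / (α - lam₀))) * ‖v‖ ^ 2 := by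
  have hsplit := norm_sq_add_norm_sq_of_mul_self_add_mul_self hJ hJ' h v
  have hims := re_inner_localized_le hJ hJ' h hC hC' v
  have hin := hlow (J v)
  have hJ'v := hout v
  have hgap : 0 < α - lam₀ := sub_pos.2 hα
  have hmass : (α - lam - γ) * ‖v‖ ^ 2 ≤ (α - lam₀) * ‖J v‖ ^ 2 := by
    linear_combination hims + hv + hin + hJ'v - α * hsplit
  have hrest : ‖J' v‖ ^ 2 ≤ (lam + γ - lam₀) / (α - lam₀) * ‖v‖ ^ 2 := by
    rw [div_mul_eq_mul_div, le_div_iff₀ hgap]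
    linear_combination hmass + (α - lam₀) * hsplit
  refine ⟨by rw [div_mul_eq_mul_div, div_le_iff₀ hgap]; linarith, ?_⟩
  linarith [mul_le_mul_of_nonpos_left hrest hlam₀, hlow (J' v)]

end Localization

section CommutingProjection

variable {𝕜 H : Type*} [RCLike 𝕜] [NormedAddCommGroup H] [InnerProductSpace 𝕜 H]
  [CompleteSpace H] {E A : H →L[𝕜] H}

theorem inner_apply_apply_one_sub_eq_zero (hE : IsStarProjection E) (hEA : Commute E A)
    (x y : H) : ⟪A (E x), (1 - E) y⟫_𝕜 = 0 := calc
  ⟪A (E x), (1 - E) y⟫_𝕜 = ⟪E (A x), (1 - E) y⟫_𝕜 := by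
    rw [← mul_apply_eq_comp A, ← hEA.eq, mul_apply_eq_comp]
  _ = ⟪A x, (E * (1 - E)) y⟫_𝕜 := hE.isSelfAdjoint.isSymmetric _ _
  _ = 0 := by rw [hE.mul_one_sub_self, zero_apply, inner_zero_right]

theorem inner_apply_self_eq_add_of_commute (hE : IsStarProjection E) (hEA : Commute E A)
    (w : H) : ⟪A w, w⟫_𝕜 = ⟪A (E w), E w⟫_𝕜 + ⟪A ((1 - E) w), (1 - E) w⟫_𝕜 := by
  have hcross := inner_apply_apply_one_sub_eq_zero hE hEA w w
  have hcross' := inner_apply_apply_one_sub_eq_zero hE.one_sub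
    ((Commute.one_left A).sub_left hEA) w w
  rw [sub_sub_cancel] at hcross'
  have hw : E w + (1 - E) w = w := by rw [sub_apply, one_apply_eq_self, add_sub_cancel]
  conv_lhs => rw [← hw]
  rw [map_add, inner_add_left, inner_add_right, inner_add_right, hcross, hcross']
  ring

theorem sub_re_inner_le_of_commute (hE : IsStarProjection E) (hEA : Commute E A)
    {lam₀ lam : ℝ} (hlow : ∀ x, lam₀ * ‖x‖ ^ 2 ≤ re ⟪A x, x⟫_𝕜)
    (hup : ∀ x, lam * ‖(1 - E) x‖ ^ 2 ≤ re ⟪A ((1 - E) x), (1 - E) x⟫_𝕜) (w : H) :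
    lam * ‖w‖ ^ 2 - re ⟪A w, w⟫_𝕜 ≤ (lam - lam₀) * ‖E w‖ ^ 2 := by
  have hform := congrArg re (inner_apply_self_eq_add_of_commute hE hEA w)
  have hnorm := congrArg re (inner_apply_self_eq_add_of_commute hE (Commute.one_right E) w)
  simp only [map_add, one_apply_eq_self, inner_self_eq_norm_sq] at hform hnorm
  rw [hform, hnorm]
  linarith [hlow (E w), hup w]

end CommutingProjection

theorem sub_mul_div_eq_add_sq_div_mul_div {lam₀ lam γ α : ℝ} (hα : lam₀ < α)
    (hgap : lam + γ < α) :
    lam + γ - lam₀ * ((lam + γ - lam₀) / (α - lam₀))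
      = (lam + γ + (lam + γ - lam₀) ^ 2 / (α - lam - γ)) * ((α - lam - γ) / (α - lam₀)) := by
  have : α - lam - γ ≠ 0 := by linarith
  have : α - lam₀ ≠ 0 := by linarith
  field_simp
  ring

theorem closed_image_estimate_general {H₀ H₁ H₂ : Type*}
    [NormedAddCommGroup H₀] [InnerProductSpace ℂ H₀] [CompleteSpace H₀]
    [NormedAddCommGroup H₁] [InnerProductSpace ℂ H₁] [CompleteSpace H₁]
    [NormedAddCommGroup H₂] [InnerProductSpace ℂ H₂] [CompleteSpace H₂]
    (i₁ : H₀ →L[ℂ] H₁) (i₂ : H₀ →L[ℂ] H₂) (p₁ : H₁ →L[ℂ] H₀)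
    (J : H₀ →L[ℂ] H₀)
    (J₁ J₁' : H₁ →L[ℂ] H₁)
    (hJ₁def : J₁ = i₁.comp (J.comp p₁))
    (hJ₁sa : IsSelfAdjoint J₁) (hJ₁'sa : IsSelfAdjoint J₁')
    (hJ₁sum : J₁ * J₁ + J₁' * J₁' = 1)
    (A₁ : H₁ →L[ℂ] H₁) (A₂ : H₂ →L[ℂ] H₂)
    (lam₀₁ lam₀₂ lam₁ lam₂ γ₁ α₁ β₁ ε₁ ρ : ℝ)
    (hlam₀₁ : lam₀₁ ≤ 0) (hα₁ : 0 < α₁)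
    (hβ₁ : 1 ≤ β₁) (hε₁ : 0 < ε₁) (hρ : 1 < ρ)
    -- (i) lower bounds for `A₁` and `A₂`
    (hA₁low : ∀ u : H₁, lam₀₁ * ‖u‖ ^ 2 ≤ (inner ℂ (A₁ u) u : ℂ).re)
    (hA₂low : ∀ v : H₂, lam₀₂ * ‖v‖ ^ 2 ≤ (inner ℂ (A₂ v) v : ℂ).re)
    -- (ii) double commutator bounds
    (hcomm : ‖⁅J₁, ⁅J₁, A₁⁆⁆‖ ≤ γ₁) (hcomm' : ‖⁅J₁', ⁅J₁', A₁⁆⁆‖ ≤ γ₁)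
    -- (iii) positivity of `A₁` outside the support of the cut-off
    (hAJ₁' : ∀ u : H₁, α₁ * ‖J₁' u‖ ^ 2 ≤ (inner ℂ (A₁ (J₁' u)) (J₁' u) : ℂ).re)
    -- (iv) comparison of norms
    (hρcomp : ∀ u : H₀, ρ⁻¹ * ‖i₂ (J u)‖ ^ 2 ≤ ‖i₁ (J u)‖ ^ 2 ∧
        ‖i₁ (J u)‖ ^ 2 ≤ ρ * ‖i₂ (J u)‖ ^ 2)
    -- (v) comparison of quadratic forms
    (hforms : ∀ u : H₀, (inner ℂ (A₂ (i₂ (J u))) (i₂ (J u)) : ℂ).re ≤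
        β₁ * (inner ℂ (A₁ (i₁ (J u))) (i₁ (J u)) : ℂ).re + ε₁ * ‖i₁ (J u)‖ ^ 2)
    (E₁ : H₁ →L[ℂ] H₁)
    (hE₁bound : ∀ u : H₁, (inner ℂ (A₁ (E₁ u)) (E₁ u) : ℂ).re ≤ lam₁ * ‖E₁ u‖ ^ 2)
    (E₂ : H₂ →L[ℂ] H₂) (hE₂proj : E₂ * E₂ = E₂) (hE₂sa : IsSelfAdjoint E₂)
    (hE₂comm : E₂ * A₂ = A₂ * E₂)
    (hE₂bound : ∀ v : H₂, lam₂ * ‖(1 - E₂) v‖ ^ 2 ≤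
        (inner ℂ (A₂ ((1 - E₂) v)) ((1 - E₂) v) : ℂ).re)
    (hgap₁ : α₁ > lam₁ + γ₁) (hlam₂low : lam₂ > lam₀₂) (hlam₂ε : lam₂ ≥ ρ * ε₁)
    (ε₀ : ℝ)
    (hε₀def : ε₀ = (lam₂ - lam₀₂)⁻¹ *
        ((lam₂ * ρ⁻¹ - ε₁) * ((α₁ - lam₁ - γ₁) / (α₁ - lam₀₁))
          - β₁ * (lam₁ + γ₁ - lam₀₁ * ((lam₁ + γ₁ - lam₀₁) / (α₁ - lam₀₁))))) :
    (∀ u : H₁, ε₀ * ‖E₁ u‖ ^ 2 ≤ ‖E₂ (i₂ (J (p₁ (E₁ u))))‖ ^ 2) ∧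
      (lam₂ > ρ * (β₁ * (lam₁ + γ₁ + (lam₁ + γ₁ - lam₀₁) ^ 2 / (α₁ - lam₁ - γ₁)) + ε₁) →
        0 < ε₀) := by
  have hρ₀ : 0 < ρ := by linarith
  have hα₀ : lam₀₁ < α₁ := by linarith
  have hgap₂ : 0 < lam₂ - lam₀₂ := sub_pos.2 hlam₂low
  have hlam₂ε' : ε₁ ≤ lam₂ * ρ⁻¹ := by rw [← div_eq_mul_inv, le_div_iff₀ hρ₀]; linarith
  refine ⟨fun u => ?_, fun hthr => ?_⟩
  · obtain ⟨hmass, henergy⟩ := localized_norm_sq_ge_and_re_inner_le hJ₁sa hJ₁'sa hJ₁sum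
      hlam₀₁ hα₀ hA₁low hAJ₁' hcomm hcomm' (hE₁bound u)
    have hJ₁v : J₁ (E₁ u) = i₁ (J (p₁ (E₁ u))) := by rw [hJ₁def]; rfl
    set w := i₂ (J (p₁ (E₁ u)))
    have hcompare : ρ⁻¹ * ‖J₁ (E₁ u)‖ ^ 2 ≤ ‖w‖ ^ 2 := by
      rw [inv_mul_le_iff₀ hρ₀, hJ₁v]; exact (hρcomp _).2
    have hform := hforms (p₁ (E₁ u))
    rw [← hJ₁v] at hform
    have hH₂ := sub_re_inner_le_of_commute ⟨hE₂proj, hE₂sa⟩ hE₂comm hA₂low hE₂bound w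
    simp only [RCLike.re_to_complex] at henergy hH₂
    refine le_of_mul_le_mul_left ?_ hgap₂
    calc (lam₂ - lam₀₂) * (ε₀ * ‖E₁ u‖ ^ 2)
        = (lam₂ * ρ⁻¹ - ε₁) * ((α₁ - lam₁ - γ₁) / (α₁ - lam₀₁) * ‖E₁ u‖ ^ 2)
          - β₁ * ((lam₁ + γ₁ - lam₀₁ * ((lam₁ + γ₁ - lam₀₁) / (α₁ - lam₀₁))) * ‖E₁ u‖ ^ 2) := by
          rw [hε₀def, mul_assoc (lam₂ - lam₀₂)⁻¹, mul_inv_cancel_left₀ hgap₂.ne']; ring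
      _ ≤ (lam₂ * ρ⁻¹ - ε₁) * ‖J₁ (E₁ u)‖ ^ 2
          - β₁ * (inner ℂ (A₁ (J₁ (E₁ u))) (J₁ (E₁ u))).re := by
          gcongr
      _ ≤ lam₂ * ‖w‖ ^ 2 - (inner ℂ (A₂ w) w).re := by
          linarith [mul_le_mul_of_nonneg_left hcompare ((mul_pos hρ₀ hε₁).le.trans hlam₂ε)]
      _ ≤ (lam₂ - lam₀₂) * ‖E₂ w‖ ^ 2 := hH₂
  · have hc : 0 < (α₁ - lam₁ - γ₁) / (α₁ - lam₀₁) := div_pos (by linarith) (by linarith)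
    have hK : β₁ * (lam₁ + γ₁ + (lam₁ + γ₁ - lam₀₁) ^ 2 / (α₁ - lam₁ - γ₁)) + ε₁
        < lam₂ * ρ⁻¹ := by
      rw [← div_eq_mul_inv, lt_div_iff₀ hρ₀]; linarith
    rw [hε₀def, sub_mul_div_eq_add_sq_div_mul_div hα₀ hgap₁, ← mul_assoc β₁, ← sub_mul]
    exact mul_pos (inv_pos.2 hgap₂) (mul_pos (by linarith) hc)

/-- **Closed-image estimate for spectral projections** (abstract form of
Proposition `p:closedimage`). Under the quantitative assumptions (i)–(v) relating the
operators `A₁` on `H₁` and `A₂` on `H₂` through the cut-off `J` on `H₀` and the maps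
`i₁, i₂, p₁`, for the spectral-type projections `E₁` and `E₂` one has
`‖E₂(i₂(J(p₁(E₁ u))))‖² ≥ ε₀ ‖E₁ u‖²` with the explicit constant `ε₀`; moreover `ε₀ > 0`
provided `λ₂` exceeds the explicit threshold. -/
theorem closed_image_estimate {H₀ H₁ H₂ : Type*}
    [NormedAddCommGroup H₀] [InnerProductSpace ℂ H₀] [CompleteSpace H₀]
    [NormedAddCommGroup H₁] [InnerProductSpace ℂ H₁] [CompleteSpace H₁]
    [NormedAddCommGroup H₂] [InnerProductSpace ℂ H₂] [CompleteSpace H₂]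
    (i₁ : H₀ →L[ℂ] H₁) (i₂ : H₀ →L[ℂ] H₂) (p₁ : H₁ →L[ℂ] H₀)
    (hp₁i₁ : p₁.comp i₁ = ContinuousLinearMap.id ℂ H₀)
    (J : H₀ →L[ℂ] H₀) (hJsa : IsSelfAdjoint J)
    (J₁ J₁' : H₁ →L[ℂ] H₁)
    (hJ₁def : J₁ = i₁.comp (J.comp p₁))
    (hJ₁sa : IsSelfAdjoint J₁) (hJ₁'sa : IsSelfAdjoint J₁')
    (hJ₁0 : ∀ u : H₁, 0 ≤ (inner ℂ (J₁ u) u : ℂ).re)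
    (hJ₁1 : ∀ u : H₁, (inner ℂ (J₁ u) u : ℂ).re ≤ ‖u‖ ^ 2)
    (hJ₁sum : J₁ * J₁ + J₁' * J₁' = 1)
    (A₁ : H₁ →L[ℂ] H₁) (A₂ : H₂ →L[ℂ] H₂)
    (hA₁sa : IsSelfAdjoint A₁) (hA₂sa : IsSelfAdjoint A₂)
    (lam₀₁ lam₀₂ lam₁ lam₂ γ₁ α₁ β₁ ε₁ ρ : ℝ)
    (hlam₀₁ : lam₀₁ ≤ 0) (hlam₀₂ : lam₀₂ ≤ 0) (hγ₁ : 0 ≤ γ₁) (hα₁ : 0 < α₁)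
    (hβ₁ : 1 ≤ β₁) (hε₁ : 0 < ε₁) (hρ : 1 < ρ)
    -- (i) lower bounds for `A₁` and `A₂`
    (hA₁low : ∀ u : H₁, lam₀₁ * ‖u‖ ^ 2 ≤ (inner ℂ (A₁ u) u : ℂ).re)
    (hA₂low : ∀ v : H₂, lam₀₂ * ‖v‖ ^ 2 ≤ (inner ℂ (A₂ v) v : ℂ).re)
    -- (ii) double commutator bounds
    (hcomm : ‖⁅J₁, ⁅J₁, A₁⁆⁆‖ ≤ γ₁) (hcomm' : ‖⁅J₁', ⁅J₁', A₁⁆⁆‖ ≤ γ₁)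
    -- (iii) positivity of `A₁` outside the support of the cut-off
    (hAJ₁' : ∀ u : H₁, α₁ * ‖J₁' u‖ ^ 2 ≤ (inner ℂ (A₁ (J₁' u)) (J₁' u) : ℂ).re)
    -- (iv) comparison of norms
    (hρcomp : ∀ u : H₀, ρ⁻¹ * ‖i₂ (J u)‖ ^ 2 ≤ ‖i₁ (J u)‖ ^ 2 ∧
        ‖i₁ (J u)‖ ^ 2 ≤ ρ * ‖i₂ (J u)‖ ^ 2)
    -- (v) comparison of quadratic forms
    (hforms : ∀ u : H₀, (inner ℂ (A₂ (i₂ (J u))) (i₂ (J u)) : ℂ).re ≤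
        β₁ * (inner ℂ (A₁ (i₁ (J u))) (i₁ (J u)) : ℂ).re + ε₁ * ‖i₁ (J u)‖ ^ 2)
    (E₁ : H₁ →L[ℂ] H₁) (hE₁proj : E₁ * E₁ = E₁) (hE₁sa : IsSelfAdjoint E₁)
    (hE₁bound : ∀ u : H₁, (inner ℂ (A₁ (E₁ u)) (E₁ u) : ℂ).re ≤ lam₁ * ‖E₁ u‖ ^ 2)
    (E₂ : H₂ →L[ℂ] H₂) (hE₂proj : E₂ * E₂ = E₂) (hE₂sa : IsSelfAdjoint E₂)
    (hE₂comm : E₂ * A₂ = A₂ * E₂)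
    (hE₂bound : ∀ v : H₂, lam₂ * ‖(1 - E₂) v‖ ^ 2 ≤
        (inner ℂ (A₂ ((1 - E₂) v)) ((1 - E₂) v) : ℂ).re)
    (hgap₁ : α₁ > lam₁ + γ₁) (hlam₂low : lam₂ > lam₀₂) (hlam₂ε : lam₂ ≥ ρ * ε₁)
    (ε₀ : ℝ)
    (hε₀def : ε₀ = (lam₂ - lam₀₂)⁻¹ *
        ((lam₂ * ρ⁻¹ - ε₁) * ((α₁ - lam₁ - γ₁) / (α₁ - lam₀₁))
          - β₁ * (lam₁ + γ₁ - lam₀₁ * ((lam₁ + γ₁ - lam₀₁) / (α₁ - lam₀₁))))) :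
    (∀ u : H₁, ε₀ * ‖E₁ u‖ ^ 2 ≤ ‖E₂ (i₂ (J (p₁ (E₁ u))))‖ ^ 2) ∧
      (lam₂ > ρ * (β₁ * (lam₁ + γ₁ + (lam₁ + γ₁ - lam₀₁) ^ 2 / (α₁ - lam₁ - γ₁)) + ε₁) →
        0 < ε₀) :=
  closed_image_estimate_general i₁ i₂ p₁ J J₁ J₁' hJ₁def hJ₁sa hJ₁'sa hJ₁sum A₁ A₂ lam₀₁ lam₀₂ lam₁
    lam₂ γ₁ α₁ β₁ ε₁ ρ hlam₀₁ hα₁ hβ₁ hε₁ hρ hA₁low hA₂low hcomm hcomm' hAJ₁' hρcomp hforms E₁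
    hE₁bound E₂ hE₂proj hE₂sa hE₂comm hE₂bound hgap₁ hlam₂low hlam₂ε ε₀ hε₀def
end

section
/- Let H be a complex Hilbert space and let P be a bounded linear operator on H whose range is a closed subspace of H. Then there exists c > 0 such that the spectrum of the positive operator P*∘P contains no point of the open interval (0, c); that is, 0 is either not in the spectrum of P*∘P or is an isolated point of it. -/
/-!
Closed range makes `P` bounded below on `(ker P)ᗮ`, say `c‖u‖ ≤ ‖P u‖` there. Fix `0 < x < c²`,
split `u = u₀ + u₁` with `u₀ ∈ ker P`, `u₁ ∈ (ker P)ᗮ`, and let `R u = u₀ - u₁` be the reflection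
in `ker P`. Then `re ⟪(x - P*P) u, R u⟫ = x‖u₀‖² - x‖u₁‖² + ‖P u₁‖² ≥ min x (c² - x) ‖u‖²`, so
`R (x - P*P)` is coercive, hence invertible (Lax–Milgram), and therefore so is `x - P*P`.
-/

section

open ContinuousLinearMap Submodule RCLike

variable {𝕜 E F : Type*} [RCLike 𝕜] [NormedAddCommGroup E] [InnerProductSpace 𝕜 E]
  [CompleteSpace E]

local notation "⟪" x ", " y "⟫" => inner 𝕜 x y

theorem isUnit_of_le_re_inner_reflection (K : Submodule 𝕜 E) [K.HasOrthogonalProjection]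
    (A : E →L[𝕜] E) {δ : ℝ} (hδ : 0 < δ) (h : ∀ u, δ * ‖u‖ ^ 2 ≤ re ⟪A u, K.reflection u⟫) :
    IsUnit A := by
  set R : E →L[𝕜] E := K.reflection.toContinuousLinearEquiv.toContinuousLinearMap
  have hRR : R * R = 1 := by ext u; simp [R]
  have hRA : IsUnit (R * A) := by
    refine isUnit_of_forall_le_norm_inner_map (R * A) (c := ⟨δ, hδ.le⟩) hδ fun u => ?_
    calc ‖u‖ ^ 2 * δ ≤ re ⟪A u, K.reflection u⟫ := by linarith [h u]
      _ = re ⟪(R * A) u, u⟫ := by rw [← K.reflection.inner_map_map (A u)]; simp [R]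
      _ ≤ ‖⟪(R * A) u, u⟫‖ := re_le_norm _
  have hR : IsUnit R := ⟨⟨R, R, hRR, hRR⟩, rfl⟩
  simpa [← mul_assoc, hRR] using hR.mul hRA

namespace ContinuousLinearMap

theorem exists_pos_mul_norm_le_of_isClosed_range [NormedAddCommGroup F] [NormedSpace 𝕜 F]
    [CompleteSpace F] (P : E →L[𝕜] F) (hP : IsClosed (Set.range P)) :
    ∃ c > 0, ∀ u ∈ (P : E →ₗ[𝕜] F).kerᗮ, c * ‖u‖ ≤ ‖P u‖ := by
  set K := (P : E →ₗ[𝕜] F).ker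
  have hinj : Function.Injective (P ∘L Kᗮ.subtypeL) := by
    refine (injective_iff_map_eq_zero _).2 fun u hu => ?_
    exact Subtype.ext (K.inf_orthogonal_eq_bot.le ⟨hu, u.2⟩)
  have hrange : Set.range (P ∘L Kᗮ.subtypeL) = Set.range P := by
    refine subset_antisymm (Set.range_subset_iff.2 fun u => ⟨u, rfl⟩) ?_
    rintro _ ⟨v, rfl⟩
    refine ⟨Kᗮ.orthogonalProjectionOnto v, ?_⟩
    have hv : P (K.starProjection v) = 0 := K.starProjection_apply_mem v
    calc P (Kᗮ.starProjection v) = P (K.starProjection v + Kᗮ.starProjection v) := by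
          rw [map_add, hv, zero_add]
      _ = P v := by rw [K.starProjection_add_starProjection_orthogonal]
  obtain ⟨C, hC⟩ := antilipschitz_of_injective_of_isClosed_range _ hinj (hrange ▸ hP)
  refine ⟨(C + 1)⁻¹, by positivity, fun u hu => ?_⟩
  have hle : ‖u‖ ≤ C * ‖P u‖ := hC.le_mul_norm (map_zero _) ⟨u, hu⟩
  rw [inv_mul_le_iff₀ (by positivity)]
  exact hle.trans (mul_le_mul_of_nonneg_right (by simp) (norm_nonneg _))

variable [NormedAddCommGroup F] [InnerProductSpace 𝕜 F] [CompleteSpace F]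

theorem re_inner_algebraMap_sub_adjoint_comp_self_add_sub (P : E →L[𝕜] F) (x : ℝ) {u₀ : E}
    (hu₀ : P u₀ = 0) (u₁ : E) :
    re ⟪(algebraMap 𝕜 (E →L[𝕜] E) x - adjoint P ∘L P) (u₀ + u₁), u₀ - u₁⟫ =
      x * ‖u₀‖ ^ 2 - x * ‖u₁‖ ^ 2 + ‖P u₁‖ ^ 2 := by
  have hP : ⟪(adjoint P ∘L P) (u₀ + u₁), u₀ - u₁⟫ = -⟪P u₁, P u₁⟫ := by
    rw [comp_apply, adjoint_inner_left, map_add, map_sub, hu₀]; simp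
  rw [sub_apply, inner_sub_left, hP, Algebra.algebraMap_eq_smul_one]
  simp only [_root_.smul_apply, one_apply_eq_self, inner_smul_left, inner_add_left,
    inner_sub_right, conj_ofReal, map_sub, map_add, re_ofReal_mul, map_neg, inner_self_eq_norm_sq]
  rw [inner_re_symm (𝕜 := 𝕜) u₁ u₀]
  ring

theorem le_re_inner_algebraMap_sub_adjoint_comp_self_reflection_ker (P : E →L[𝕜] F) {c : ℝ}
    (hc : ∀ u ∈ (P : E →ₗ[𝕜] F).kerᗮ, c * ‖u‖ ≤ ‖P u‖) (hc₀ : 0 ≤ c) (x : ℝ) (u : E) :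
    min x (c ^ 2 - x) * ‖u‖ ^ 2 ≤
      re ⟪(algebraMap 𝕜 (E →L[𝕜] E) x - adjoint P ∘L P) u, (P : E →ₗ[𝕜] F).ker.reflection u⟫ := by
  set K := (P : E →ₗ[𝕜] F).ker
  set u₀ := K.starProjection u
  set u₁ := Kᗮ.starProjection u
  have hu : u = u₀ + u₁ := (K.starProjection_add_starProjection_orthogonal u).symm
  have hRu : K.reflection u = u₀ - u₁ := by
    rw [reflection_apply, two_smul]
    nth_rewrite 3 [hu]
    abel
  have hPu₁ : c ^ 2 * ‖u₁‖ ^ 2 ≤ ‖P u₁‖ ^ 2 := by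
    rw [← mul_pow]
    exact pow_le_pow_left₀ (by positivity) (hc u₁ (Kᗮ.starProjection_apply_mem u)) 2
  have h₀ : min x (c ^ 2 - x) * ‖u₀‖ ^ 2 ≤ x * ‖u₀‖ ^ 2 := by gcongr; exact min_le_left _ _
  have h₁ : min x (c ^ 2 - x) * ‖u₁‖ ^ 2 ≤ (c ^ 2 - x) * ‖u₁‖ ^ 2 := by
    gcongr; exact min_le_right _ _
  calc min x (c ^ 2 - x) * ‖u‖ ^ 2
      = min x (c ^ 2 - x) * ‖u₀‖ ^ 2 + min x (c ^ 2 - x) * ‖u₁‖ ^ 2 := by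
        rw [K.norm_sq_eq_add_norm_sq_starProjection u]; ring
    _ ≤ x * ‖u₀‖ ^ 2 - x * ‖u₁‖ ^ 2 + ‖P u₁‖ ^ 2 := by linarith
    _ = re ⟪(algebraMap 𝕜 (E →L[𝕜] E) x - adjoint P ∘L P) u, K.reflection u⟫ := by
        rw [hRu, ← re_inner_algebraMap_sub_adjoint_comp_self_add_sub P x
          (K.starProjection_apply_mem u), ← hu]

end ContinuousLinearMap

end

/-- If a bounded operator `P` on a complex Hilbert space has closed range, then `0` is
either outside the spectrum of `P*P` or an isolated point of it: there is a `c > 0` such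
that the spectrum of `P*P` contains no point of the open interval `(0, c)`. -/
theorem closed_range_spectrum_gap {H : Type*} [NormedAddCommGroup H]
    [InnerProductSpace ℂ H] [CompleteSpace H]
    (P : H →L[ℂ] H) (hP : IsClosed (Set.range P)) :
    ∃ c : ℝ, 0 < c ∧ ∀ x : ℝ, 0 < x → x < c →
      (x : ℂ) ∉ spectrum ℂ (ContinuousLinearMap.adjoint P * P) := by
  obtain ⟨c, hc₀, hc⟩ := P.exists_pos_mul_norm_le_of_isClosed_range hP
  refine ⟨c ^ 2, by positivity, fun x hx hxc => ?_⟩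
  rw [spectrum.mem_iff, not_not]
  exact isUnit_of_le_re_inner_reflection _ _ (lt_min hx (sub_pos.2 hxc))
    (P.le_re_inner_algebraMap_sub_adjoint_comp_self_reflection_ker hc hc₀.le x)
end

section
/- Let H be a complex Hilbert space and let 𝒜 be a norm-closed star-subalgebra of the algebra of bounded linear operators on H. Let P ∈ 𝒜 be an operator whose range is a closed subspace of H. Then the positive square root S = √(P*∘P) belongs to 𝒜, and there exists U ∈ 𝒜 such that P = U∘S, U∘U*∘U = U (U is a partial isometry), and the kernel of U equals the kernel of P. -/
/-!
Let `T = P*P`. By the open mapping theorem, closed range makes `P*` bounded below on `range P`,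
hence `‖P x‖ ≤ C ‖T x‖`, i.e. `C⁻² T ≤ T²`, so the spectrum of `T` misses `(0, C⁻²)`.
Therefore `t ↦ t^{-1/2}` agrees on `σ(T) \ {0}` with a continuous nowhere vanishing `g`, and
`U = P g(T)` works: `P f(T)` only depends on `f` on `σ(T) \ {0}`, because
`T (f(T) - f'(T)) = 0` forces `P (f(T) - f'(T)) = 0` by the C*-identity; and `g(T)` is
invertible and commutes with `T`, whose kernel is that of `P`. Both `S = √T` and `g(T)` are
continuous functions of `T ∈ 𝒜`, so they stay in the closed algebra `𝒜`.
-/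

open ContinuousLinearMap

section CStarAlgebra

variable {A : Type*} [CStarAlgebra A]

lemma eq_zero_or_le_of_mem_spectrum_of_smul_le_mul_self [PartialOrder A] [StarOrderedRing A]
    {a : A} {c : ℝ} (ha : 0 ≤ a) (hca : c • a ≤ a * a) {t : ℝ} (ht : t ∈ spectrum ℝ a) :
    t = 0 ∨ c ≤ t := by
  have hmul : cfc (fun t : ℝ => t * t) a = a * a := by
    rw [cfc_mul (fun t : ℝ => t) (fun t : ℝ => t) a, cfc_id' ℝ a]
  rw [← cfc_const_mul_id c a, ← hmul, cfc_le_iff ..] at hca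
  rcases (spectrum_nonneg_of_nonneg ha ht).eq_or_lt with h | h
  · exact .inl h.symm
  · exact .inr (le_of_mul_le_mul_right (hca t ht) h)

lemma mul_cfc_star_mul_self_congr (a : A) {f g : ℝ → ℝ}
    (hfg : Set.EqOn f g (spectrum ℝ (star a * a) \ {0}))
    (hf : ContinuousOn f (spectrum ℝ (star a * a)) := by cfc_cont_tac)
    (hg : ContinuousOn g (spectrum ℝ (star a * a)) := by cfc_cont_tac) :
    a * cfc f (star a * a) = a * cfc g (star a * a) := by
  have hd : star a * a * (cfc f (star a * a) - cfc g (star a * a)) = 0 := by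
    have hvanish : Set.EqOn (fun t => t * (f t - g t)) 0 (spectrum ℝ (star a * a)) := by
      intro t ht
      by_cases h0 : t = 0
      · simp [h0]
      · simp [hfg ⟨ht, h0⟩]
    have := cfc_mul (fun t : ℝ => t) (fun t => f t - g t) (star a * a)
    rw [cfc_id' ℝ (star a * a), cfc_sub f g (star a * a), cfc_congr hvanish, cfc_zero] at this
    exact this.symm
  rw [← sub_eq_zero, ← mul_sub, ← CStarRing.star_mul_self_eq_zero_iff, star_mul, mul_assoc,
    ← mul_assoc (star a), hd, mul_zero]

lemma cfc_sqrt_mul_cfc_sqrt [PartialOrder A] [StarOrderedRing A] {a : A} (ha : 0 ≤ a) :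
    cfc Real.sqrt a * cfc Real.sqrt a = a := by
  rw [← cfcₙ_eq_cfc .., ← CFC.sqrt_eq_real_sqrt a ha, CFC.sqrt_mul_sqrt_self a ha]

def IsPartialIsometry (u : A) : Prop := u * star u * u = u

variable {a : A} {g : ℝ → ℝ}

lemma mul_cfc_mul_cfc_sqrt_eq_self (hg : Continuous g)
    (hga : ∀ t ∈ spectrum ℝ (star a * a), t ≠ 0 → g t * √t = 1) :
    a * cfc g (star a * a) * cfc Real.sqrt (star a * a) = a := by
  rw [mul_assoc, ← cfc_mul .., mul_cfc_star_mul_self_congr a (g := 1) fun t ht => hga t ht.1 ht.2,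
    Pi.one_def, cfc_const_one ℝ (star a * a), mul_one]

lemma isPartialIsometry_mul_cfc (hg : Continuous g)
    (hga : ∀ t ∈ spectrum ℝ (star a * a), t ≠ 0 → g t * √t = 1) :
    IsPartialIsometry (a * cfc g (star a * a)) := by
  have hg3 : ∀ t ∈ spectrum ℝ (star a * a), t ≠ 0 → g t * g t * t * g t = g t := by
    intro t ht ht0
    have h := hga t ht ht0
    have ht : 0 ≤ t := by
      by_contra! h'
      rw [Real.sqrt_eq_zero_of_nonpos h'.le, mul_zero] at h
      exact zero_ne_one h
    calc g t * g t * t * g t = (g t * √t) ^ 2 * g t := by rw [mul_pow, Real.sq_sqrt ht]; ring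
      _ = g t := by rw [h, one_pow, one_mul]
  have hcfc : cfc g (star a * a) * cfc g (star a * a) * (star a * a) * cfc g (star a * a) =
      cfc (fun t => g t * g t * t * g t) (star a * a) := by
    rw [cfc_mul .., cfc_mul .., cfc_mul g g, cfc_id' ℝ (star a * a)]
  calc a * cfc g (star a * a) * star (a * cfc g (star a * a)) * (a * cfc g (star a * a))
      = a * (cfc g (star a * a) * cfc g (star a * a) * (star a * a) * cfc g (star a * a)) := by
        rw [star_mul, (cfc_predicate g (star a * a)).star_eq]; noncomm_ring
    _ = a * cfc g (star a * a) := by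
        rw [hcfc, mul_cfc_star_mul_self_congr a fun t ht => hg3 t ht.1 ht.2]

end CStarAlgebra

lemma exists_continuous_inv_sqrt_of_gap {s : Set ℝ} {c : ℝ} (hc : 0 < c)
    (hs : ∀ t ∈ s, t = 0 ∨ c ≤ t) :
    ∃ g : ℝ → ℝ, Continuous g ∧ (∀ t, g t ≠ 0) ∧ ∀ t ∈ s, t ≠ 0 → g t * √t = 1 := by
  have hpos : ∀ t, 0 < √(max t c) := fun t => Real.sqrt_pos.mpr (hc.trans_le (le_max_right t c))
  refine ⟨fun t => (√(max t c))⁻¹,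
    (Real.continuous_sqrt.comp (continuous_id.max continuous_const)).inv₀ fun t => (hpos t).ne',
    fun t => inv_ne_zero (hpos t).ne', fun t ht ht0 => ?_⟩
  have hmax : max t c = t := max_eq_left ((hs t ht).resolve_left ht0)
  simp only [hmax]
  exact inv_mul_cancel₀ (hmax ▸ hpos t).ne'

section HilbertSpace

variable {𝕜 E F : Type*} [RCLike 𝕜] [NormedAddCommGroup E] [InnerProductSpace 𝕜 E]
  [CompleteSpace E] [NormedAddCommGroup F] [InnerProductSpace 𝕜 F] [CompleteSpace F]

lemma exists_norm_le_mul_norm_adjoint_apply_of_isClosed_range {P : E →L[𝕜] F}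
    (hran : IsClosed (Set.range P)) : ∃ C > 0, ∀ x, ‖P x‖ ≤ C * ‖adjoint P (P x)‖ := by
  have : IsClosed (LinearMap.range (P : E →ₗ[𝕜] F) : Set F) := hran
  have := IsClosed.completeSpace_coe (s := (LinearMap.range (P : E →ₗ[𝕜] F) : Set F))
  obtain ⟨C, hC, hpre⟩ := P.rangeRestrict.exists_preimage_norm_le
    (LinearMap.surjective_rangeRestrict (P : E →ₗ[𝕜] F))
  refine ⟨C, hC, fun x => ?_⟩
  obtain ⟨x', hx', hnorm⟩ := hpre ⟨P x, x, rfl⟩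
  have hx' : P x' = P x := congrArg Subtype.val hx'
  have hsq : ‖P x‖ ^ 2 ≤ C * ‖P x‖ * ‖adjoint P (P x)‖ := calc
    ‖P x‖ ^ 2 = RCLike.re (inner 𝕜 (P x') (P x)) := by rw [hx', inner_self_eq_norm_sq]
    _ = RCLike.re (inner 𝕜 x' (adjoint P (P x))) := by rw [adjoint_inner_right]
    _ ≤ ‖x'‖ * ‖adjoint P (P x)‖ := (RCLike.re_le_norm _).trans (norm_inner_le_norm _ _)
    _ ≤ C * ‖P x‖ * ‖adjoint P (P x)‖ := by gcongr; exact hnorm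
  rcases (norm_nonneg (P x)).eq_or_lt with h | h
  · rw [← h]; positivity
  · nlinarith

lemma ker_mul_eq_ker_of_commute_adjoint_mul_self {P G : E →L[𝕜] E} (hG : IsUnit G)
    (hcomm : Commute G (adjoint P * P)) :
    LinearMap.ker ((P * G : E →L[𝕜] E) : E →ₗ[𝕜] E) = LinearMap.ker (P : E →ₗ[𝕜] E) := by
  have hker : ∀ x, adjoint P (P x) = 0 ↔ P x = 0 := fun x =>
    SetLike.ext_iff.mp (ker_adjoint_comp_self P) x
  have hinj := (isUnit_iff_bijective.mp hG).injective
  ext x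
  change P (G x) = 0 ↔ P x = 0
  rw [← hker, ← hker, ← mul_apply_eq_comp (adjoint P) P, ← mul_apply_eq_comp (adjoint P * P) G,
    ← hcomm.eq, mul_apply_eq_comp, map_eq_zero_iff G hinj, mul_apply_eq_comp]

end HilbertSpace

section ComplexHilbertSpace

variable {H : Type*} [NormedAddCommGroup H] [InnerProductSpace ℂ H] [CompleteSpace H]

lemma inv_sq_smul_adjoint_mul_self_le {P : H →L[ℂ] H} {C : ℝ} (hC : 0 < C)
    (hP : ∀ x, ‖P x‖ ≤ C * ‖adjoint P (P x)‖) :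
    (C ^ 2)⁻¹ • (adjoint P * P) ≤ adjoint P * P * (adjoint P * P) := by
  set T := adjoint P * P
  have hT : IsSelfAdjoint T := (isPositive_adjoint_comp_self P).isSelfAdjoint
  have hTT : ∀ x, RCLike.re (inner ℂ ((T * T) x) x) = ‖T x‖ ^ 2 := fun x => by
    rw [apply_norm_sq_eq_inner_adjoint_left T x, ← star_eq_adjoint, hT.star_eq, mul_def]
  have hPP : ∀ x, RCLike.re (inner ℂ (T x) x) = ‖P x‖ ^ 2 := fun x => by
    rw [apply_norm_sq_eq_inner_adjoint_left P x]; rfl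
  rw [le_def, isPositive_def']
  refine ⟨.sub (by simpa [sq] using hT.pow 2) (.smul (.all _) hT), fun x => ?_⟩
  have hPx : ‖P x‖ ^ 2 ≤ C ^ 2 * ‖T x‖ ^ 2 := by
    rw [← mul_pow]; exact pow_le_pow_left₀ (norm_nonneg _) (hP x) 2
  rw [reApplyInnerSelf_apply, sub_apply, inner_sub_left, map_sub, smul_apply,
    RCLike.real_smul_eq_coe_smul (K := ℂ), inner_smul_real_left, RCLike.smul_re, hTT, hPP,
    sub_nonneg, inv_mul_le_iff₀ (by positivity)]
  exact hPx

lemma exists_spectral_gap_star_mul_self_of_isClosed_range {P : H →L[ℂ] H}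
    (hran : IsClosed (Set.range P)) :
    ∃ c > 0, ∀ t ∈ spectrum ℝ (star P * P), t = 0 ∨ c ≤ t := by
  obtain ⟨C, hC, hP⟩ := exists_norm_le_mul_norm_adjoint_apply_of_isClosed_range hran
  refine ⟨(C ^ 2)⁻¹, by positivity, fun t ht => ?_⟩
  refine eq_zero_or_le_of_mem_spectrum_of_smul_le_mul_self (star_mul_self_nonneg P) ?_ ht
  rw [star_eq_adjoint]
  exact inv_sq_smul_adjoint_mul_self_le hC hP

end ComplexHilbertSpace

/-- **Polar decomposition in a C*-subalgebra** (Lemma on polar decomposition).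
Let `𝒜` be a norm-closed star-subalgebra of the bounded operators on a complex Hilbert
space `H` and let `P ∈ 𝒜` have closed range. Then the positive square root
`S = √(P*P)` (the unique positive operator with `S² = P*P`) belongs to `𝒜`, and there is
a `U ∈ 𝒜` with `P = U∘S`, `U` a partial isometry (`U U* U = U`), and `ker U = ker P`. -/
theorem polar_decomposition_in_cstar_subalgebra {H : Type*} [NormedAddCommGroup H]
    [InnerProductSpace ℂ H] [CompleteSpace H]
    (𝒜 : StarSubalgebra ℂ (H →L[ℂ] H)) (h𝒜closed : IsClosed (𝒜 : Set (H →L[ℂ] H)))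
    (P : H →L[ℂ] H) (hP : P ∈ 𝒜) (hran : IsClosed (Set.range P)) :
    ∃ S : H →L[ℂ] H, S.IsPositive ∧ S * S = ContinuousLinearMap.adjoint P * P ∧
      S ∈ 𝒜 ∧ ∃ U ∈ 𝒜, P = U * S ∧ U * ContinuousLinearMap.adjoint U * U = U ∧
        LinearMap.ker (U : H →ₗ[ℂ] H) = LinearMap.ker (P : H →ₗ[ℂ] H) := by
  simp only [← star_eq_adjoint]
  have hT : star P * P ∈ 𝒜 := mul_mem (star_mem hP) hP
  obtain ⟨c, hc, hgap⟩ := exists_spectral_gap_star_mul_self_of_isClosed_range hran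
  obtain ⟨g, hg, hg0, hga⟩ := exists_continuous_inv_sqrt_of_gap hc hgap
  have hGunit : IsUnit (cfc g (star P * P)) := (isUnit_cfc_iff g _).mpr fun t _ => hg0 t
  have hGcomm : Commute (cfc g (star P * P)) (adjoint P * P) := by
    have := cfc_commute_cfc g (fun t : ℝ => t) (star P * P)
    rwa [cfc_id' ℝ (star P * P), star_eq_adjoint] at this
  exact ⟨cfc Real.sqrt (star P * P),
    (nonneg_iff_isPositive _).mp (cfc_nonneg fun t _ => Real.sqrt_nonneg t),
    cfc_sqrt_mul_cfc_sqrt (star_mul_self_nonneg P), cfc_mem _ hT, P * cfc g (star P * P),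
    mul_mem hP (cfc_mem _ hT), (mul_cfc_mul_cfc_sqrt_eq_self hg hga).symm,
    isPartialIsometry_mul_cfc hg hga, ker_mul_eq_ker_of_commute_adjoint_mul_self hGunit hGcomm⟩
end

section
/- Let H be a complex Hilbert space and let 𝒜 be a norm-closed star-subalgebra of the algebra of bounded linear operators on H. Let P and Q be orthogonal projections belonging to 𝒜, and let T ∈ 𝒜 satisfy Q∘T∘P = T, T is injective on the range of P, and T maps the range of P onto the range of Q. Then P and Q are Murray–von Neumann equivalent in 𝒜: there exists V ∈ 𝒜 with V*∘V = P and V∘V* = Q. -/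
/-!
With `B = T*T + (1 - P)`, the operator `T` is bounded below on the range of `P` (open mapping
theorem), which makes `B ≥ r` for some `r > 0`; so `B` is strictly positive and
`V = T B^(-1/2)` lies in `𝒜` by the continuous functional calculus. As `B` commutes with `P` and
`T*T = BP`, we get `V*V = B^(-1/2) B B^(-1/2) P = P`. Finally `VV*` is self-adjoint, fixes the
range of `T`, which contains that of `Q`, and satisfies `Q VV* = VV*`, so `VV* = Q`.
-/

open scoped NNReal

lemma IsSelfAdjoint.eq_of_mul_eq_of_mul_eq {A : Type*} [Mul A] [StarMul A] {R Q : A}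
    (hR : IsSelfAdjoint R) (hQ : IsSelfAdjoint Q) (hQR : Q * R = R) (hRQ : R * Q = Q) :
    R = Q :=
  calc R = star (Q * R) := by rw [hQR, hR.star_eq]
    _ = R * Q := by rw [star_mul, hR.star_eq, hQ.star_eq]
    _ = Q := hRQ

section StarRing

variable {A : Type*} [Ring A] [StarRing A] {P T : A}

lemma IsStarProjection.commute_star_mul_self_add_one_sub (hP : IsStarProjection P)
    (hTP : T * P = T) : Commute (star T * T + (1 - P)) P := by
  have hPT : P * star T = star T := by
    simpa [star_mul, hP.isSelfAdjoint.star_eq] using congrArg star hTP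
  simp only [Commute, SemiconjBy, add_mul, mul_add, mul_sub, sub_mul, one_mul, mul_one,
    hP.isIdempotentElem.eq, mul_assoc, hTP, ← mul_assoc P, hPT]

lemma IsStarProjection.star_mul_self_eq_mul (hP : IsStarProjection P) (hTP : T * P = T) :
    star T * T = (star T * T + (1 - P)) * P := by
  rw [add_mul, sub_mul, one_mul, hP.isIdempotentElem.eq, sub_self, add_zero, mul_assoc, hTP]

end StarRing

section CStarAlgebra

variable {A : Type*} [CStarAlgebra A] [PartialOrder A] [StarOrderedRing A]

lemma CFC.rpow_mem {S : StarSubalgebra ℂ A} (hS : IsClosed (S : Set A)) {a : A} (ha : a ∈ S)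
    (y : ℝ) : a ^ y ∈ S := by
  have : IsClosed (S : Set A) := hS
  by_cases ha₀ : 0 ≤ a
  · rw [CFC.rpow_eq_cfc_real ha₀]
    exact cfc_mem _ ha
  · rw [CFC.rpow_def, cfc_apply_of_not_predicate a ha₀]
    exact zero_mem S

variable {P T : A}

lemma IsStarProjection.isStrictlyPositive_star_mul_self_add_one_sub (hP : IsStarProjection P)
    {r : ℝ} (hr : 0 < r) (hle : r • P ≤ star T * T) :
    IsStrictlyPositive (star T * T + (1 - P)) := by
  have hm : 0 < min r 1 := lt_min hr one_pos
  refine (isStrictlyPositive_algebraMap (A := A) hm).of_le ?_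
  calc algebraMap ℝ A (min r 1) = min r 1 • P + min r 1 • (1 - P) := by
        rw [← smul_add, add_sub_cancel, Algebra.algebraMap_eq_smul_one]
    _ ≤ r • P + (1 : ℝ) • (1 - P) := by
        gcongr
        · exact hP.nonneg
        · exact min_le_left _ _
        · exact hP.one_sub.nonneg
        · exact min_le_right _ _
    _ ≤ star T * T + (1 - P) := by rw [one_smul]; gcongr

/-- On the range of `P` this is the polar part `T |T|⁻¹` of `T`; the summand `1 - P` makes the
modulus invertible. -/
noncomputable def polarPart (P T : A) : A := T * (star T * T + (1 - P)) ^ (-(1 / 2) : ℝ)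

lemma polarPart_mem {S : StarSubalgebra ℂ A} (hS : IsClosed (S : Set A)) (hP : P ∈ S)
    (hT : T ∈ S) : polarPart P T ∈ S :=
  mul_mem hT <| CFC.rpow_mem hS (add_mem (mul_mem (star_mem hT) hT) (sub_mem (one_mem S) hP)) _

lemma IsStarProjection.star_polarPart_mul_self (hP : IsStarProjection P) (hTP : T * P = T)
    (hB : IsStrictlyPositive (star T * T + (1 - P))) :
    star (polarPart P T) * polarPart P T = P := by
  set B := star T * T + (1 - P) with hB_def
  set W := B ^ (-(1 / 2) : ℝ)
  have hW : IsSelfAdjoint W := CFC.rpow_nonneg.isSelfAdjoint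
  have hWP : Commute W P := (hP.commute_star_mul_self_add_one_sub hTP).cfc_nnreal _
  calc star (polarPart P T) * polarPart P T = W * (star T * T) * W := by
        simp only [polarPart, star_mul, hW.star_eq, mul_assoc, W, B]
    _ = W * B * W * P := by
        rw [hP.star_mul_self_eq_mul hTP, ← hB_def]
        simp only [mul_assoc, hWP.eq]
    _ = P := by rw [CFC.conjugate_rpow_neg_one_half B, one_mul]

lemma IsStarProjection.polarPart_mul_star_self_mul (hP : IsStarProjection P) (hTP : T * P = T)
    (hB : IsStrictlyPositive (star T * T + (1 - P))) :
    polarPart P T * star (polarPart P T) * T = T := by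
  set B := star T * T + (1 - P) with hB_def
  set W := B ^ (-(1 / 2) : ℝ)
  have hW : IsSelfAdjoint W := CFC.rpow_nonneg.isSelfAdjoint
  have hWB : Commute W B := (Commute.refl B).cfc_nnreal _
  calc polarPart P T * star (polarPart P T) * T = T * (W * W * (star T * T)) := by
        simp only [polarPart, star_mul, hW.star_eq, mul_assoc, W, B]
    _ = T * (W * B * W) * P := by
        rw [hP.star_mul_self_eq_mul hTP, ← hB_def, mul_assoc W B, ← hWB.eq]
        noncomm_ring
    _ = T := by rw [CFC.conjugate_rpow_neg_one_half B, mul_one, hTP]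

end CStarAlgebra

namespace ContinuousLinearMap

lemma mul_eq_right_of_range_subset {R M : Type*} [Semiring R] [AddCommMonoid M] [Module R M]
    [TopologicalSpace M] {S T Q : M →L[R] M} (hST : S * T = T)
    (hQT : Set.range Q ⊆ Set.range T) : S * Q = Q := by
  ext x
  obtain ⟨y, hy⟩ := hQT ⟨x, rfl⟩
  change S (Q x) = Q x
  rw [← hy]
  exact DFunLike.congr_fun hST y

lemma exists_norm_le_mul_norm_of_injOn_range {𝕜 E F : Type*} [NontriviallyNormedField 𝕜]
    [NormedAddCommGroup E] [NormedSpace 𝕜 E] [NormedAddCommGroup F] [NormedSpace 𝕜 F]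
    [CompleteSpace E] [CompleteSpace F] {P : E →L[𝕜] E} (hP : IsIdempotentElem P)
    {T : E →L[𝕜] F} (hinj : Set.InjOn T (Set.range P)) (hcl : IsClosed (T '' Set.range P)) :
    ∃ K : ℝ≥0, ∀ x ∈ Set.range P, ‖x‖ ≤ K * ‖T x‖ := by
  have : CompleteSpace P.range := (IsIdempotentElem.isClosed_range hP).completeSpace_coe
  set f := T.comp P.range.subtypeL
  have hrange : Set.range f = T '' Set.range P := by
    rw [coe_comp, Set.range_comp, Submodule.coe_subtypeL, Submodule.coe_subtype,
      Subtype.range_coe, LinearMap.coe_range, coe_coe]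
  have hf : Function.Injective f := fun x y hxy ↦ Subtype.ext (hinj x.2 y.2 hxy)
  obtain ⟨K, hK⟩ := f.antilipschitz_of_injective_of_isClosed_range hf (hrange ▸ hcl)
  exact ⟨K, fun x hx ↦ f.bound_of_antilipschitz hK ⟨x, hx⟩⟩

variable {H : Type*} [NormedAddCommGroup H] [InnerProductSpace ℂ H] [CompleteSpace H]

lemma star_mul_self_le_star_mul_self {S T : H →L[ℂ] H} (h : ∀ x, ‖S x‖ ≤ ‖T x‖) :
    star S * S ≤ star T * T := by
  rw [le_def, isPositive_def']
  refine ⟨.sub (.star_mul_self T) (.star_mul_self S), fun x ↦ ?_⟩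
  rw [reApplyInnerSelf_apply, sub_apply, inner_sub_left, map_sub, star_eq_adjoint,
    star_eq_adjoint, mul_def, mul_def, ← apply_norm_sq_eq_inner_adjoint_left,
    ← apply_norm_sq_eq_inner_adjoint_left, sub_nonneg]
  exact pow_le_pow_left₀ (norm_nonneg _) (h x) 2

lemma _root_.IsStarProjection.exists_pos_smul_le_star_mul_self {P T : H →L[ℂ] H}
    (hP : IsStarProjection P) (hTP : T * P = T) (hinj : Set.InjOn T (Set.range P))
    (hcl : IsClosed (T '' Set.range P)) : ∃ r > (0 : ℝ), r • P ≤ star T * T := by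
  obtain ⟨K, hK⟩ := exists_norm_le_mul_norm_of_injOn_range hP.isIdempotentElem hinj hcl
  set c : ℝ := ((K : ℝ) + 1)⁻¹
  have hc : 0 < c := by positivity
  have hcP : star (c • P) * (c • P) = c ^ 2 • P := by
    rw [star_smul, star_trivial, hP.isSelfAdjoint.star_eq, smul_mul_smul_comm,
      hP.isIdempotentElem.eq, sq]
  refine ⟨c ^ 2, by positivity, ?_⟩
  rw [← hcP]
  refine star_mul_self_le_star_mul_self fun x ↦ ?_
  have hx : ‖P x‖ ≤ K * ‖T x‖ := DFunLike.congr_fun hTP x ▸ hK (P x) ⟨x, rfl⟩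
  rw [smul_apply, norm_smul, Real.norm_of_nonneg hc.le, inv_mul_le_iff₀ (by positivity)]
  nlinarith [norm_nonneg (T x)]

end ContinuousLinearMap

theorem murray_von_neumann_equivalence_general {H : Type*} [NormedAddCommGroup H]
    [InnerProductSpace ℂ H] [CompleteSpace H]
    (𝒜 : StarSubalgebra ℂ (H →L[ℂ] H)) (h𝒜closed : IsClosed (𝒜 : Set (H →L[ℂ] H)))
    (P Q T : H →L[ℂ] H) (hP : P ∈ 𝒜) (hT : T ∈ 𝒜)
    (hPproj : P * P = P) (hPsa : IsSelfAdjoint P)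
    (hQproj : Q * Q = Q) (hQsa : IsSelfAdjoint Q)
    (hQTP : Q * T * P = T)
    (hinj : Set.InjOn T (Set.range P))
    (honto : T '' Set.range P = Set.range Q) :
    ∃ V ∈ 𝒜, ContinuousLinearMap.adjoint V * V = P ∧
      V * ContinuousLinearMap.adjoint V = Q := by
  have hPp : IsStarProjection P := ⟨hPproj, hPsa⟩
  have hTP : T * P = T := by
    conv_lhs => rw [← hQTP]
    rw [mul_assoc, hPproj, hQTP]
  have hQT : Q * T = T := by
    conv_lhs => rw [← hQTP]
    rw [← mul_assoc, ← mul_assoc, hQproj, hQTP]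
  have hcl : IsClosed (T '' Set.range P) := by
    simpa [honto, LinearMap.coe_range] using
      ContinuousLinearMap.IsIdempotentElem.isClosed_range hQproj
  obtain ⟨r, hr, hle⟩ := hPp.exists_pos_smul_le_star_mul_self hTP hinj hcl
  have hB := hPp.isStrictlyPositive_star_mul_self_add_one_sub hr hle
  refine ⟨polarPart P T, polarPart_mem h𝒜closed hP hT, ?_, ?_⟩ <;>
    rw [← ContinuousLinearMap.star_eq_adjoint]
  · exact hPp.star_polarPart_mul_self hTP hB
  · refine (IsSelfAdjoint.mul_star_self _).eq_of_mul_eq_of_mul_eq hQsa ?_ ?_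
    · rw [polarPart, ← mul_assoc, ← mul_assoc, hQT]
    · exact ContinuousLinearMap.mul_eq_right_of_range_subset
        (hPp.polarPart_mul_star_self_mul hTP hB) (honto ▸ Set.image_subset_range _ _)

/-- **Murray–von Neumann equivalence from an intertwining operator.** Let `𝒜` be a
norm-closed star-subalgebra of the bounded operators on a complex Hilbert space, let
`P, Q ∈ 𝒜` be orthogonal projections and let `T ∈ 𝒜` satisfy `Q∘T∘P = T`, `T` injective
on the range of `P` and `T(range P) = range Q`. Then `P` and `Q` are Murray–von Neumann
equivalent in `𝒜`: there is `V ∈ 𝒜` with `V*V = P` and `VV* = Q`. -/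
theorem murray_von_neumann_equivalence {H : Type*} [NormedAddCommGroup H]
    [InnerProductSpace ℂ H] [CompleteSpace H]
    (𝒜 : StarSubalgebra ℂ (H →L[ℂ] H)) (h𝒜closed : IsClosed (𝒜 : Set (H →L[ℂ] H)))
    (P Q T : H →L[ℂ] H) (hP : P ∈ 𝒜) (hQ : Q ∈ 𝒜) (hT : T ∈ 𝒜)
    (hPproj : P * P = P) (hPsa : IsSelfAdjoint P)
    (hQproj : Q * Q = Q) (hQsa : IsSelfAdjoint Q)
    (hQTP : Q * T * P = T)
    (hinj : Set.InjOn T (Set.range P))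
    (honto : T '' Set.range P = Set.range Q) :
    ∃ V ∈ 𝒜, ContinuousLinearMap.adjoint V * V = P ∧
      V * ContinuousLinearMap.adjoint V = Q :=
  murray_von_neumann_equivalence_general 𝒜 h𝒜closed P Q T hP hT hPproj hPsa hQproj hQsa hQTP hinj
    honto
end

section
/- Let B be a ring, let A be a (not necessarily unital) subring of B, and let I be a left ideal of A (an additive subgroup of A with a·x ∈ I for all a ∈ A and x ∈ I). Say that a subset S of B is spectrally invariant in B if for every x ∈ S and every y ∈ B satisfying x + y + x·y = 0 and x + y + y·x = 0 (i.e. y is the quasi-inverse of x in B), one has y ∈ S. If A is spectrally invariant in B, then I is spectrally invariant in B. -/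
/-- A subset `S` of a ring `B` is *spectrally invariant* in `B` if quasi-inverses (in `B`)
of elements of `S` again lie in `S`: whenever `x ∈ S` and `y ∈ B` satisfy
`x + y + x*y = 0` and `x + y + y*x = 0`, one has `y ∈ S`. -/
def SpectrallyInvariant {B : Type*} [Ring B] (S : Set B) : Prop :=
  ∀ x ∈ S, ∀ y : B, x + y + x * y = 0 → x + y + y * x = 0 → y ∈ S

/-- If `A` is a (not necessarily unital) subring of a ring `B` that is spectrally
invariant in `B`, and `I` is a left ideal of `A`, then `I` is spectrally invariant
in `B`. -/
theorem left_ideal_spectrally_invariant {B : Type*} [Ring B]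
    (A : NonUnitalSubring B) (I : AddSubgroup B)
    (hIA : (I : Set B) ⊆ (A : Set B))
    (hleft : ∀ a ∈ A, ∀ x ∈ I, a * x ∈ I)
    (hA : SpectrallyInvariant (A : Set B)) :
    SpectrallyInvariant (I : Set B) := by
  intro x hx y h1 h2
  have hyA : y ∈ (A : Set B) := hA x (hIA hx) y h1 h2
  have hyx : y * x ∈ I := hleft y hyA x hx
  have : y = -(x + y * x) := by
    have h3 : y + (x + y * x) = 0 := by rw [← h2]; abel
    exact eq_neg_of_add_eq_zero_left h3
  rw [this]
  exact I.neg_mem (I.add_mem hx hyx)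
end

section
/- Let a group Γ act on a set X, fix a base point x₀ ∈ X, and let ψ : Γ → (X → ℝ) be a family of functions such that ψ_e is identically zero, ψ_γ(x₀) = 0 for every γ ∈ Γ, and for all γ, γ' ∈ Γ the quantity ψ_γ(x) + ψ_{γ'}(γ·x) − ψ_{γ'γ}(x) does not depend on x ∈ X. Define σ : Γ × Γ → ℂ by σ(γ,γ') = exp(−i·ψ_γ(γ'·x₀)). Then σ is a multiplier on Γ: σ(γ,e) = σ(e,γ) = 1 for all γ ∈ Γ, and σ(γ₁,γ₂)·σ(γ₁γ₂,γ₃) = σ(γ₁,γ₂γ₃)·σ(γ₂,γ₃) for all γ₁, γ₂, γ₃ ∈ Γ (the cocycle relation). -/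
/-!
Put `φ(γ, γ') = ψ_γ(γ'·x₀)`, so that `σ = exp(−iφ)`. Evaluating the `x`-independent quantity
`ψ_{γ₂}(x) + ψ_{γ₁}(γ₂·x) − ψ_{γ₁γ₂}(x)` at `x = γ₃·x₀` and at `x = x₀`, where `ψ(x₀) = 0`,
shows that `φ` is an additive 2-cocycle; exponentiating turns this into the multiplicative
cocycle relation, and `ψ_e = 0`, `ψ_γ(x₀) = 0` give the normalisation.
-/

open Complex

theorem magnetic_phase_cocycle {Γ X : Type*} [Group Γ] [MulAction Γ X] (x₀ : X) (ψ : Γ → X → ℝ)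
    (hψx₀ : ∀ γ : Γ, ψ γ x₀ = 0)
    (hconst : ∀ γ γ' : Γ, ∀ x y : X,
      ψ γ x + ψ γ' (γ • x) - ψ (γ' * γ) x = ψ γ y + ψ γ' (γ • y) - ψ (γ' * γ) y)
    (γ₁ γ₂ γ₃ : Γ) :
    ψ γ₁ (γ₂ • x₀) + ψ (γ₁ * γ₂) (γ₃ • x₀) = ψ γ₁ ((γ₂ * γ₃) • x₀) + ψ γ₂ (γ₃ • x₀) := by
  have h := hconst γ₂ γ₁ (γ₃ • x₀) x₀
  rw [hψx₀, hψx₀, ← mul_smul] at h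
  linarith

theorem norm_exp_neg_I_mul_ofReal (t : ℝ) : ‖exp (-I * t)‖ = 1 := by
  rw [show -I * t = (-t : ℝ) * I by push_cast; ring]
  exact norm_exp_ofReal_mul_I _

theorem exp_neg_I_mul_ofReal_mul (a b : ℝ) :
    exp (-I * a) * exp (-I * b) = exp (-I * (a + b : ℝ)) := by
  rw [← exp_add]
  push_cast
  ring_nf

/-- The phase functions `ψ_γ` of a magnetic translation family determine a multiplier
`σ(γ,γ') = exp(−i ψ_γ(γ'·x₀))` on `Γ`: it takes values in `U(1)`, is normalised at the
identity, and satisfies the cocycle relation. -/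
theorem magnetic_multiplier {Γ X : Type*} [Group Γ] [MulAction Γ X] (x₀ : X)
    (ψ : Γ → X → ℝ)
    (hψe : ∀ x : X, ψ 1 x = 0)
    (hψx₀ : ∀ γ : Γ, ψ γ x₀ = 0)
    (hconst : ∀ γ γ' : Γ, ∀ x y : X,
      ψ γ x + ψ γ' (γ • x) - ψ (γ' * γ) x = ψ γ y + ψ γ' (γ • y) - ψ (γ' * γ) y)
    (σ : Γ → Γ → ℂ)
    (hσdef : ∀ γ γ' : Γ, σ γ γ' = Complex.exp (-Complex.I * (ψ γ (γ' • x₀) : ℂ))) :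
    (∀ γ γ' : Γ, ‖σ γ γ'‖ = 1) ∧
    (∀ γ : Γ, σ γ 1 = 1 ∧ σ 1 γ = 1) ∧
    (∀ γ₁ γ₂ γ₃ : Γ, σ γ₁ γ₂ * σ (γ₁ * γ₂) γ₃ = σ γ₁ (γ₂ * γ₃) * σ γ₂ γ₃) := by
  refine ⟨fun γ γ' => ?_, fun γ => ⟨?_, ?_⟩, fun γ₁ γ₂ γ₃ => ?_⟩
  · rw [hσdef, norm_exp_neg_I_mul_ofReal]
  · simp [hσdef, hψx₀]
  · simp [hσdef, hψe]
  · simp only [hσdef, exp_neg_I_mul_ofReal_mul, magnetic_phase_cocycle x₀ ψ hψx₀ hconst]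
end

section
/- Let a group Γ act on a set X, fix a base point x₀ ∈ X, and let ψ : Γ → (X → ℝ) satisfy: ψ_e is identically zero, ψ_γ(x₀) = 0 for every γ ∈ Γ, and for all γ, γ' ∈ Γ the quantity ψ_γ(x) + ψ_{γ'}(γ·x) − ψ_{γ'γ}(x) is independent of x ∈ X. For each γ ∈ Γ define the magnetic translation T_γ on complex-valued functions on X by (T_γ u)(x) = exp(−i·ψ_γ(γ⁻¹·x))·u(γ⁻¹·x), and set σ(γ,γ') = exp(−i·ψ_γ(γ'·x₀)). Then T_e is the identity map, and for all γ₁, γ₂ ∈ Γ and every function u : X → ℂ one has T_{γ₁}(T_{γ₂}u) = σ(γ₁,γ₂)·T_{γ₁γ₂}u; that is, γ ↦ T_γ is a projective (Γ,σ)-representation. -/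
/-- **Magnetic translations form a projective representation.** With
`(T_γ u)(x) = exp(−i ψ_γ(γ⁻¹·x)) u(γ⁻¹·x)` and `σ(γ,γ') = exp(−i ψ_γ(γ'·x₀))`, one has
`T_e = id` and `T_{γ₁} ∘ T_{γ₂} = σ(γ₁,γ₂) T_{γ₁γ₂}`. -/
theorem magnetic_translations_projective_rep {Γ X : Type*} [Group Γ] [MulAction Γ X]
    (x₀ : X)
    (ψ : Γ → X → ℝ)
    (hψe : ∀ x : X, ψ 1 x = 0)
    (hψx₀ : ∀ γ : Γ, ψ γ x₀ = 0)
    (hconst : ∀ γ γ' : Γ, ∀ x y : X,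
      ψ γ x + ψ γ' (γ • x) - ψ (γ' * γ) x = ψ γ y + ψ γ' (γ • y) - ψ (γ' * γ) y)
    (T : Γ → (X → ℂ) → (X → ℂ))
    (hTdef : ∀ (γ : Γ) (u : X → ℂ) (x : X),
      T γ u x = Complex.exp (-Complex.I * (ψ γ (γ⁻¹ • x) : ℂ)) * u (γ⁻¹ • x))
    (σ : Γ → Γ → ℂ)
    (hσdef : ∀ γ γ' : Γ, σ γ γ' = Complex.exp (-Complex.I * (ψ γ (γ' • x₀) : ℂ))) :
    (∀ u : X → ℂ, T 1 u = u) ∧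
    (∀ (γ₁ γ₂ : Γ) (u : X → ℂ), T γ₁ (T γ₂ u) = fun x => σ γ₁ γ₂ * T (γ₁ * γ₂) u x) := by
  constructor
  · intro u
    funext x
    rw [hTdef, hψe]
    simp
  · intro γ₁ γ₂ u
    funext x
    rw [hTdef, hTdef, hTdef, hσdef]
    have hz : γ₂⁻¹ • γ₁⁻¹ • x = (γ₁ * γ₂)⁻¹ • x := by
      rw [mul_inv_rev, mul_smul]
    rw [hz]
    set z := (γ₁ * γ₂)⁻¹ • x with hzdef
    have hkey : ψ γ₂ z + ψ γ₁ (γ₂ • z) - ψ (γ₁ * γ₂) z = ψ γ₁ (γ₂ • x₀) := by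
      have := hconst γ₂ γ₁ z x₀
      rw [hψx₀, hψx₀] at this
      linarith
    have hγz : γ₂ • z = γ₁⁻¹ • x := by
      rw [hzdef, mul_inv_rev, mul_smul, smul_inv_smul]
    rw [hγz] at hkey
    have hsumR : ψ γ₁ (γ₁⁻¹ • x) + ψ γ₂ z = ψ γ₁ (γ₂ • x₀) + ψ (γ₁ * γ₂) z := by
      linarith
    have hsum : (ψ γ₁ (γ₁⁻¹ • x) : ℂ) + (ψ γ₂ z : ℂ)
        = (ψ γ₁ (γ₂ • x₀) : ℂ) + (ψ (γ₁ * γ₂) z : ℂ) := by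
      exact_mod_cast congrArg Complex.ofReal hsumR
    rw [← mul_assoc, ← mul_assoc, ← Complex.exp_add, ← Complex.exp_add,
        ← mul_add, ← mul_add, hsum]
end

section
/- Let Γ be a group, H a complex Hilbert space, and σ : Γ × Γ → ℂ a function with |σ(γ,γ')| = 1 for all γ, γ'. Let a : Γ → B(H) be a family of bounded operators on H such that each a(γ) is a compact operator and Σ_{γ∈Γ} ‖a(γ)‖ < ∞. Then: (1) for every f in the Hilbert space ℓ²(Γ;H) of square-summable H-valued functions on Γ and every γ' ∈ Γ, the series Σ_{γ∈Γ} conj(σ(γ,γ⁻¹γ'))·a(γ)(f(γ⁻¹γ')) converges in H, and the resulting function γ' ↦ (Af)(γ') defines a bounded linear operator A on ℓ²(Γ;H); (2) ‖A‖ ≤ Σ_{γ} ‖a(γ)‖; (3) A lies in the operator-norm closure of the set of operators of the same form associated to finitely supported families Γ → B(H) of compact operators. -/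
/-!
The summand of index `γ` is the operator `f ↦ (γ' ↦ conj σ(γ, γ⁻¹γ') • a(γ) (f (γ⁻¹γ')))`:
a pointwise multiplication by operators of norm at most `‖a γ‖`, followed by a left
translation, which is an isometry of `ℓᵖ`. Hence the summands are norm-summable in the
Banach space `B(ℓ²(Γ; H))` and `A` is their sum; the pointwise series converge because
evaluation at `γ'` is continuous, and the finite partial sums of the series are the operators
attached to the truncations `𝟙ₛ · a`, which converge to `A`.
-/

open scoped ENNReal

theorem Memℓp.comp_equiv {α β E : Type*} [NormedAddCommGroup E] {p : ℝ≥0∞} {f : α → E}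
    (hf : Memℓp f p) (e : β ≃ α) :
    Memℓp (f ∘ e) p := by
  obtain rfl | rfl | hp := p.trichotomy
  · rw [memℓp_zero_iff] at hf ⊢
    exact hf.preimage e.injective.injOn
  · rw [memℓp_infty_iff] at hf ⊢
    rwa [← e.surjective.range_comp] at hf
  · rw [memℓp_gen_iff hp] at hf ⊢
    exact e.summable_iff.mpr hf

namespace lp

variable {α β 𝕜 E F : Type*} [NontriviallyNormedField 𝕜] [NormedAddCommGroup E] [NormedSpace 𝕜 E]
  [NormedAddCommGroup F] [NormedSpace 𝕜 F] {p : ℝ≥0∞} [Fact (1 ≤ p)]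

theorem norm_comp_equiv (f : lp (fun _ : α => E) p) (e : β ≃ α) :
    ‖(⟨f ∘ e, (lp.memℓp f).comp_equiv e⟩ : lp (fun _ : β => E) p)‖ = ‖f‖ := by
  obtain rfl | rfl | hp := p.trichotomy
  · exact absurd (Fact.out : (1 : ℝ≥0∞) ≤ 0) (by norm_num)
  · rw [norm_eq_ciSup, norm_eq_ciSup]
    exact e.iSup_comp (g := fun i => ‖f i‖)
  · rw [norm_eq_tsum_rpow hp, norm_eq_tsum_rpow hp]
    exact congrArg (· ^ _) (e.tsum_eq fun i => ‖f i‖ ^ p.toReal)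

variable (𝕜 E p) in
def compEquivₗᵢ (e : β ≃ α) : lp (fun _ : α => E) p →ₗᵢ[𝕜] lp (fun _ : β => E) p where
  toFun f := ⟨f ∘ e, (lp.memℓp f).comp_equiv e⟩
  map_add' _ _ := rfl
  map_smul' _ _ := rfl
  norm_map' f := norm_comp_equiv f e

variable (p) in
noncomputable def pointwiseCLM (T : α → E →L[𝕜] F) (C : NNReal) (hT : ∀ i, ‖T i‖ ≤ C) :
    lp (fun _ : α => E) p →L[𝕜] lp (fun _ : α => F) p :=
  LinearMap.mkContinuous
    { toFun f := ⟨fun i => T i (f i), ((lp.memℓp f).norm.const_mul (C : ℝ)).mono fun i =>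
        (T i).le_of_opNorm_le (hT i) (f i)⟩
      map_add' f g := by ext i; exact map_add (T i) (f i) (g i)
      map_smul' c f := by ext i; simp [lp.coeFn_smul] } C fun f => by
    have hp : p ≠ 0 := (zero_lt_one.trans_le Fact.out).ne'
    calc _ ≤ ‖(C : ℝ) • toNorm f‖ := norm_mono hp fun i => by
          simpa [toNorm, coeFn_smul, abs_of_nonneg C.2] using (T i).le_of_opNorm_le (hT i) (f i)
      _ = C * ‖f‖ := by rw [norm_const_smul hp, norm_toNorm, NNReal.norm_eq]

theorem norm_pointwiseCLM_le (T : α → E →L[𝕜] F) (C : NNReal) (hT : ∀ i, ‖T i‖ ≤ C) :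
    ‖pointwiseCLM p T C hT‖ ≤ C :=
  LinearMap.mkContinuous_norm_le _ C.2 _

end lp

section TwistedShift

variable {Γ 𝕜 E F : Type*} [Group Γ] [NontriviallyNormedField 𝕜] [NormedAddCommGroup E]
  [NormedSpace 𝕜 E] [NormedAddCommGroup F] [NormedSpace 𝕜 F] {p : ℝ≥0∞} [Fact (1 ≤ p)]

variable (p) in
noncomputable def twistedShift (w : Γ → 𝕜) (hw : ∀ x, ‖w x‖ ≤ 1) (c : E →L[𝕜] F) (γ : Γ) :
    lp (fun _ : Γ => E) p →L[𝕜] lp (fun _ : Γ => F) p :=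
  (lp.compEquivₗᵢ 𝕜 F p (Equiv.mulLeft γ⁻¹)).toContinuousLinearMap ∘L
    lp.pointwiseCLM p (fun x => w x • c) ‖c‖₊ fun x =>
      (norm_smul_le _ _).trans (mul_le_of_le_one_left (norm_nonneg c) (hw x))

theorem twistedShift_apply (w : Γ → 𝕜) (hw : ∀ x, ‖w x‖ ≤ 1) (c : E →L[𝕜] F) (γ : Γ)
    (f : lp (fun _ : Γ => E) p) (γ' : Γ) :
    twistedShift p w hw c γ f γ' = w (γ⁻¹ * γ') • c (f (γ⁻¹ * γ')) := rfl

theorem norm_twistedShift_le (w : Γ → 𝕜) (hw : ∀ x, ‖w x‖ ≤ 1) (c : E →L[𝕜] F) (γ : Γ) :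
    ‖twistedShift p w hw c γ‖ ≤ ‖c‖ :=
  calc _ ≤ _ := ContinuousLinearMap.opNorm_comp_le _ _
    _ ≤ 1 * ‖c‖ := mul_le_mul (LinearIsometry.norm_toContinuousLinearMap_le _)
        (lp.norm_pointwiseCLM_le _ _ _) (norm_nonneg _) zero_le_one
    _ = ‖c‖ := one_mul _

@[simp]
theorem twistedShift_zero (w : Γ → 𝕜) (hw : ∀ x, ‖w x‖ ≤ 1) (γ : Γ) :
    twistedShift p w hw (0 : E →L[𝕜] F) γ = 0 := by
  ext f γ'
  simp [twistedShift_apply]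

variable {w : Γ → Γ → 𝕜} (hw : ∀ γ x, ‖w γ x‖ ≤ 1) {b : Γ → E →L[𝕜] F}

theorem hasSum_twistedShift_apply {B : lp (fun _ : Γ => E) p →L[𝕜] lp (fun _ : Γ => F) p}
    (hB : HasSum (fun γ => twistedShift p (w γ) (hw γ) (b γ) γ) B)
    (f : lp (fun _ : Γ => E) p) (γ' : Γ) :
    HasSum (fun γ => w γ (γ⁻¹ * γ') • b γ (f (γ⁻¹ * γ'))) (B f γ') :=
  hB.mapL ((lp.evalCLM 𝕜 (fun _ : Γ => F) p γ').comp (ContinuousLinearMap.apply 𝕜 _ f))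

theorem summable_twistedShift [CompleteSpace F] (hb : Summable fun γ => ‖b γ‖) :
    Summable fun γ => twistedShift p (w γ) (hw γ) (b γ) γ :=
  hb.of_norm_bounded fun _ => norm_twistedShift_le _ _ _ _

theorem norm_tsum_twistedShift_le (hb : Summable fun γ => ‖b γ‖) :
    ‖∑' γ, twistedShift p (w γ) (hw γ) (b γ) γ‖ ≤ ∑' γ, ‖b γ‖ := by
  have hbound γ : ‖twistedShift p (w γ) (hw γ) (b γ) γ‖ ≤ ‖b γ‖ := norm_twistedShift_le _ _ _ _
  have hsum := hb.of_nonneg_of_le (fun _ => norm_nonneg _) hbound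
  exact (norm_tsum_le_tsum_norm hsum).trans (hsum.tsum_le_tsum hbound hb)

theorem hasSum_twistedShift_indicator (s : Finset Γ) :
    HasSum (fun γ => twistedShift p (w γ) (hw γ) ((s : Set Γ).indicator b γ) γ)
      (∑ γ ∈ s, twistedShift p (w γ) (hw γ) (b γ) γ) := by
  have h := hasSum_sum_of_ne_finset_zero (s := s) (L := SummationFilter.unconditional Γ)
    (f := fun γ => twistedShift p (w γ) (hw γ) ((s : Set Γ).indicator b γ) γ) fun γ hγ => by
      simp [Set.indicator_of_notMem (Finset.mem_coe.not.2 hγ)]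
  rwa [Finset.sum_congr rfl fun γ hγ => by rw [Set.indicator_of_mem (Finset.mem_coe.2 hγ)]] at h

end TwistedShift

/-- **Twisted convolution operators with summable compact coefficients** (analogue of
Lemma D1). Let `σ : Γ × Γ → ℂ` be unimodular and `a : Γ → B(H)` a family of compact
operators with `Σ_γ ‖a(γ)‖ < ∞`. Then the twisted-convolution series
`(Af)(γ') = Σ_γ conj(σ(γ, γ⁻¹γ')) a(γ)(f(γ⁻¹γ'))` converges for every `f ∈ ℓ²(Γ; H)`
and every `γ'`, defines a bounded operator `A` on `ℓ²(Γ; H)` with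
`‖A‖ ≤ Σ_γ ‖a(γ)‖`, and `A` lies in the norm closure of the set of operators of the same
form associated to finitely supported families of compact operators. -/
theorem twisted_convolution_summable {Γ : Type*} [Group Γ] {H : Type*}
    [NormedAddCommGroup H] [InnerProductSpace ℂ H] [CompleteSpace H]
    (σ : Γ → Γ → ℂ) (hσ : ∀ γ γ' : Γ, ‖σ γ γ'‖ = 1)
    (a : Γ → H →L[ℂ] H)
    (hacpt : ∀ γ : Γ, IsCompactOperator (a γ))
    (hasum : Summable fun γ : Γ => ‖a γ‖) :
    ∃ A : lp (fun _ : Γ => H) 2 →L[ℂ] lp (fun _ : Γ => H) 2,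
      (∀ (f : lp (fun _ : Γ => H) 2) (γ' : Γ),
        HasSum (fun γ : Γ => (starRingEnd ℂ) (σ γ (γ⁻¹ * γ')) • a γ (f (γ⁻¹ * γ')))
          (A f γ')) ∧
      ‖A‖ ≤ ∑' γ : Γ, ‖a γ‖ ∧
      A ∈ closure {B : lp (fun _ : Γ => H) 2 →L[ℂ] lp (fun _ : Γ => H) 2 |
        ∃ b : Γ → H →L[ℂ] H, (Function.support b).Finite ∧
          (∀ γ : Γ, IsCompactOperator (b γ)) ∧
          ∀ (f : lp (fun _ : Γ => H) 2) (γ' : Γ),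
            HasSum (fun γ : Γ => (starRingEnd ℂ) (σ γ (γ⁻¹ * γ')) • b γ (f (γ⁻¹ * γ')))
              (B f γ')} := by
  have hw (γ x : Γ) : ‖(starRingEnd ℂ) (σ γ x)‖ ≤ 1 := by rw [Complex.norm_conj, hσ]
  have hA := (summable_twistedShift (p := 2) hw hasum).hasSum
  refine ⟨_, hasSum_twistedShift_apply hw hA, norm_tsum_twistedShift_le hw hasum,
    mem_closure_of_tendsto hA (.of_forall fun s => ?_)⟩
  refine ⟨(s : Set Γ).indicator a, s.finite_toSet.subset Set.support_indicator_subset,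
    fun γ => ?_, hasSum_twistedShift_apply hw (hasSum_twistedShift_indicator hw s)⟩
  by_cases hγ : γ ∈ (s : Set Γ)
  · simpa [hγ] using hacpt γ
  · simpa [hγ] using isCompactOperator_zero
end

section
/- Let Γ be a group, H a complex Hilbert space, and σ : Γ × Γ → ℂ a function with |σ(γ,γ')| = 1 for all γ, γ', σ(γ,e) = σ(e,γ) = 1, and satisfying the cocycle relation σ(γ₁,γ₂)·σ(γ₁γ₂,γ₃) = σ(γ₁,γ₂γ₃)·σ(γ₂,γ₃). For each γ ∈ Γ let T^R_γ be the bounded operator on ℓ²(Γ;H) defined by (T^R_γ f)(γ') = σ(γ',γ)·f(γ'γ). Let A be a bounded operator on ℓ²(Γ;H) commuting with T^R_γ for every γ ∈ Γ, and define a(γ) : H → H by a(γ)v = (A(δ_e⊗v))(γ). Then each a(γ) is a bounded operator, and for every finitely supported f ∈ ℓ²(Γ;H) and every γ' ∈ Γ one has (Af)(γ') = Σ_{γ₁ ∈ supp f} conj(σ(γ'γ₁⁻¹, γ₁))·a(γ'γ₁⁻¹)(f(γ₁)). -/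
/-!
Applying `A ∘ T^R_γ₁ = T^R_γ₁ ∘ A` to `δ_γ₁ ⊗ v` and using
`T^R_γ₁ (δ_γ₁ ⊗ v) = δ_e ⊗ σ(e, γ₁) v = δ_e ⊗ v` gives
`a(γ'γ₁⁻¹) v = σ(γ'γ₁⁻¹, γ₁) (A(δ_γ₁ ⊗ v))(γ')`; since `|σ| = 1`, multiplying by the conjugate
solves for `(A(δ_γ₁ ⊗ v))(γ')`. A finitely supported `f` is a finite sum of such `δ_γ₁ ⊗ f(γ₁)`.
Boundedness of `a(γ)` is that of the composite `ev_γ ∘ A ∘ (δ_e ⊗ ·)`.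
-/

theorem lp.sum_single_of_forall_notMem_eq_zero {α : Type*} [DecidableEq α] {E : α → Type*}
    [∀ i, NormedAddCommGroup (E i)] {p : ENNReal} (f : lp E p) {s : Finset α}
    (hs : ∀ i ∉ s, f i = 0) :
    ∑ i ∈ s, lp.single p i (f i) = f := by
  ext i
  rw [lp.coeFn_sum, Finset.sum_apply]
  by_cases hi : i ∈ s
  · rw [Finset.sum_eq_single_of_mem i hi fun j _ hji => lp.single_apply_ne p j _ hji.symm,
      lp.single_apply_self]
  · rw [hs i hi]
    exact Finset.sum_eq_zero fun j hj =>
      lp.single_apply_ne p j _ (ne_of_mem_of_not_mem hj hi).symm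

section TwistedTranslation

variable {Γ : Type*} [Group Γ] [DecidableEq Γ] {E : Type*} [NormedAddCommGroup E]
  [Module ℂ E] {p : ENNReal} {S : lp (fun _ : Γ => E) p → lp (fun _ : Γ => E) p}
  {c : Γ → ℂ} {g : Γ}

theorem twisted_translation_single (hS : ∀ f γ, S f γ = c γ • f (γ * g)) (x : Γ) (v : E) :
    S (lp.single p x v) = lp.single p (x * g⁻¹) (c (x * g⁻¹) • v) := by
  ext γ
  rw [hS]
  by_cases hγ : γ = x * g⁻¹
  · rw [hγ, inv_mul_cancel_right, lp.single_apply_self, lp.single_apply_self]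
  · rw [lp.single_apply_ne _ _ _ hγ, lp.single_apply_ne _ _ _ (by rintro rfl; simp at hγ),
      smul_zero]

theorem apply_single_of_comm_twisted_translation (hS : ∀ f γ, S f γ = c γ • f (γ * g))
    (hc : ∀ γ, ‖c γ‖ = 1) {A : lp (fun _ : Γ => E) p → lp (fun _ : Γ => E) p}
    (hA : ∀ f, A (S f) = S (A f)) (v : E) (γ : Γ) :
    A (lp.single p g v) γ =
      starRingEnd ℂ (c (γ * g⁻¹)) • A (lp.single p 1 (c 1 • v)) (γ * g⁻¹) := by
  have key := congrArg (fun f : lp (fun _ : Γ => E) p => f (γ * g⁻¹)) (hA (lp.single p g v))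
  simp only [twisted_translation_single hS, mul_inv_cancel, hS, inv_mul_cancel_right] at key
  rw [key, smul_smul, Complex.conj_mul', hc, Complex.ofReal_one, one_pow, one_smul]

end TwistedTranslation

theorem commutant_structure_general {Γ : Type*} [Group Γ] [DecidableEq Γ] {H : Type*}
    [NormedAddCommGroup H] [InnerProductSpace ℂ H]
    (σ : Γ → Γ → ℂ)
    (hσabs : ∀ γ γ' : Γ, ‖σ γ γ'‖ = 1)
    (hσunit : ∀ γ : Γ, σ γ 1 = 1 ∧ σ 1 γ = 1)
    (T : Γ → (lp (fun _ : Γ => H) 2 →L[ℂ] lp (fun _ : Γ => H) 2))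
    (hTdef : ∀ (γ : Γ) (f : lp (fun _ : Γ => H) 2) (γ' : Γ),
      (T γ f) γ' = σ γ' γ • f (γ' * γ))
    (A : lp (fun _ : Γ => H) 2 →L[ℂ] lp (fun _ : Γ => H) 2)
    (hcomm : ∀ γ : Γ, A.comp (T γ) = (T γ).comp A)
    (a : Γ → H → H)
    (hadef : ∀ (γ : Γ) (v : H), a γ v = (A (lp.single 2 (1 : Γ) v)) γ) :
    (∀ γ : Γ, ∃ b : H →L[ℂ] H, ∀ v : H, b v = a γ v) ∧
    (∀ (f : lp (fun _ : Γ => H) 2) (hf : (Function.support fun γ : Γ => f γ).Finite)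
        (γ' : Γ),
      (A f) γ' = ∑ γ₁ ∈ hf.toFinset,
        (starRingEnd ℂ) (σ (γ' * γ₁⁻¹) γ₁) • a (γ' * γ₁⁻¹) (f γ₁)) := by
  refine ⟨fun γ => ⟨(lp.evalCLM ℂ _ 2 γ).comp (A.comp (lp.singleContinuousLinearMap ℂ _ 2 1)),
    fun v => (hadef γ v).symm⟩, fun f hf γ' => ?_⟩
  conv_lhs => rw [← lp.sum_single_of_forall_notMem_eq_zero f
    fun γ hγ => Function.notMem_support.mp (mt hf.mem_toFinset.mpr hγ)]
  rw [map_sum, lp.coeFn_sum, Finset.sum_apply]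
  refine Finset.sum_congr rfl fun γ₁ _ => ?_
  refine (apply_single_of_comm_twisted_translation (hTdef γ₁) (hσabs · γ₁)
    (A := A) (DFunLike.congr_fun (hcomm γ₁)) (f γ₁) γ').trans ?_
  rw [(hσunit γ₁).2, one_smul, hadef]

/-- (Analogue of the structure Lemma for the commutant of the right twisted
translations.) Let `σ` be a unimodular multiplier on `Γ`, let `T^R_γ` be the right
twisted translations `(T^R_γ f)(γ') = σ(γ',γ) f(γ'γ)` on `ℓ²(Γ; H)`, and let `A` be a
bounded operator commuting with all `T^R_γ`. Set `a(γ)v = (A(δ_e ⊗ v))(γ)`. Then each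
`a(γ)` is a bounded operator and, for every finitely supported `f ∈ ℓ²(Γ; H)`,
`(Af)(γ') = Σ_{γ₁ ∈ supp f} conj(σ(γ'γ₁⁻¹, γ₁)) a(γ'γ₁⁻¹)(f(γ₁))`. -/
theorem commutant_structure {Γ : Type*} [Group Γ] [DecidableEq Γ] {H : Type*}
    [NormedAddCommGroup H] [InnerProductSpace ℂ H] [CompleteSpace H]
    (σ : Γ → Γ → ℂ)
    (hσabs : ∀ γ γ' : Γ, ‖σ γ γ'‖ = 1)
    (hσunit : ∀ γ : Γ, σ γ 1 = 1 ∧ σ 1 γ = 1)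
    (hσcoc : ∀ γ₁ γ₂ γ₃ : Γ, σ γ₁ γ₂ * σ (γ₁ * γ₂) γ₃ = σ γ₁ (γ₂ * γ₃) * σ γ₂ γ₃)
    (T : Γ → (lp (fun _ : Γ => H) 2 →L[ℂ] lp (fun _ : Γ => H) 2))
    (hTdef : ∀ (γ : Γ) (f : lp (fun _ : Γ => H) 2) (γ' : Γ),
      (T γ f) γ' = σ γ' γ • f (γ' * γ))
    (A : lp (fun _ : Γ => H) 2 →L[ℂ] lp (fun _ : Γ => H) 2)
    (hcomm : ∀ γ : Γ, A.comp (T γ) = (T γ).comp A)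
    (a : Γ → H → H)
    (hadef : ∀ (γ : Γ) (v : H), a γ v = (A (lp.single 2 (1 : Γ) v)) γ) :
    (∀ γ : Γ, ∃ b : H →L[ℂ] H, ∀ v : H, b v = a γ v) ∧
    (∀ (f : lp (fun _ : Γ => H) 2) (hf : (Function.support fun γ : Γ => f γ).Finite)
        (γ' : Γ),
      (A f) γ' = ∑ γ₁ ∈ hf.toFinset,
        (starRingEnd ℂ) (σ (γ' * γ₁⁻¹) γ₁) • a (γ' * γ₁⁻¹) (f γ₁)) :=
  commutant_structure_general σ hσabs hσunit T hTdef A hcomm a hadef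
end

section
/- Let Γ be a group, k ≥ 1 an integer, and ℓ : Γ → ℝ a function with ℓ(γ) ≥ 0 and ℓ(γ⁻¹) = ℓ(γ) for all γ. For a finitely supported function f : Γ → ℂ and m ∈ ℕ set ν_m(f) = (Σ_{γ∈Γ} (1+ℓ(γ))^{2m}·|f(γ)|²)^{1/2}, and for finitely supported f, g define the convolution (f∗g)(γ) = Σ_{γ₁γ₂=γ} f(γ₁)g(γ₂). Assume the Haagerup inequality: there exist N ∈ ℕ and C' > 0 such that ‖f∗g‖₂ ≤ C'·ν_N(f)·‖g‖₂ for all finitely supported f, g : Γ → ℂ, where ‖·‖₂ is the ℓ² norm. Let c : Γ^k → ℂ satisfy |c(γ₁,…,γ_k)| ≤ C·(1+ℓ(γ₁))^{a₁}·…·(1+ℓ(γ_k))^{a_k} for some constant C > 0 and natural numbers a₁,…,a_k, and let w : Γ^{k+1} → ℂ satisfy |w(γ₀,…,γ_k)| ≤ 1. Then for all finitely supported f₀, f₁, …, f_k : Γ → ℂ one has |Σ_{γ₀γ₁⋯γ_k = e} f₀(γ₀)·f₁(γ₁)·…·f_k(γ_k)·c(γ₁,…,γ_k)·w(γ₀,…,γ_k)|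 ≤ C·(C')^k·ν₀(f₀)·ν_{N+a₁}(f₁)·…·ν_{N+a_k}(f_k). -/
/-!
Bounding `c` and `w` pointwise reduces the claim to `C` times the same sum for the real functions
`F i = ‖f i‖ (1 + ℓ)^(b i)`, where `b 0 = 0` and `b (j+1) = a j`. Without `c` and `w`, that sum
over `γ₀ ⋯ γ_k = 1` is the value at `1` of the convolution `F 0 ∗ F 1 ∗ ⋯ ∗ F k`, that is
`∑_y F 0 y · G y⁻¹` with `G = F 1 ∗ ⋯ ∗ F k`. Cauchy–Schwarz bounds it by `‖F 0‖₂ ‖G‖₂`, and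
`k` applications of the Haagerup inequality give `‖G‖₂ ≤ C'^k ∏ ν_N (F (j+1))`, where
`ν_N (F (j+1)) = ν_{N + a j} (f (j+1))`.
-/

open Function Finset
open scoped Pointwise

section Convolution

variable {Γ R : Type*} [Group Γ] [CommSemiring R] [TopologicalSpace R]

noncomputable def groupConv (p q : Γ → R) (γ : Γ) : R := ∑' y, p y * q (y⁻¹ * γ)

noncomputable def groupConvProd [DecidableEq Γ] : (n : ℕ) → (Fin n → Γ → R) → Γ → R
  | 0, _ => Pi.single 1 1
  | n + 1, F => groupConv (F 0) (groupConvProd n (Fin.tail F))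

lemma groupConv_eq_sum {p : Γ → R} (q : Γ → R) {s : Finset Γ} (hs : support p ⊆ s) (γ : Γ) :
    groupConv p q γ = ∑ y ∈ s, p y * q (y⁻¹ * γ) :=
  tsum_eq_sum fun y hy => by rw [notMem_support.mp fun h => hy (hs h), zero_mul]

lemma support_groupConv_subset (p q : Γ → R) :
    support (groupConv p q) ⊆ support p * support q := by
  intro γ hγ
  by_contra hmem
  refine hγ ((tsum_congr fun y => ?_).trans tsum_zero)
  by_contra hy
  exact hmem ⟨y, left_ne_zero_of_mul hy, y⁻¹ * γ, right_ne_zero_of_mul hy,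
    mul_inv_cancel_left y γ⟩

lemma support_groupConvProd_finite [DecidableEq Γ] {n : ℕ} {F : Fin n → Γ → R}
    (hF : ∀ i, (support (F i)).Finite) : (support (groupConvProd n F)).Finite := by
  induction n with
  | zero => exact (Set.finite_singleton 1).subset Pi.support_single_subset
  | succ n ih => exact ((hF 0).mul (ih fun i => hF i.succ)).subset (support_groupConv_subset _ _)

lemma Fintype.sum_piFinset_succ {M : Type*} [AddCommMonoid M] {n : ℕ} {α : Type*}
    (t : Fin (n + 1) → Finset α) (φ : (Fin (n + 1) → α) → M) :
    ∑ g ∈ Fintype.piFinset t, φ g =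
      ∑ y ∈ t 0, ∑ h ∈ Fintype.piFinset (Fin.tail t), φ (Fin.cons y h) := by
  have := Finset.filter_piFinset_eq_map_consEquiv t (fun _ => True)
  simp only [Finset.filter_true] at this
  rw [this, sum_map, sum_product]
  rfl

lemma groupConvProd_eq_sum [DecidableEq Γ] {n : ℕ} (F : Fin n → Γ → R) (t : Fin n → Finset Γ)
    (ht : ∀ i, support (F i) ⊆ t i) (x : Γ) :
    groupConvProd n F x = ∑ g ∈ Fintype.piFinset t,
      if (List.ofFn g).prod = x then ∏ i, F i (g i) else 0 := by
  induction n generalizing x with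
  | zero => simp [groupConvProd, Pi.single_apply, eq_comm]
  | succ n ih =>
    rw [groupConvProd, groupConv_eq_sum _ (ht 0), Fintype.sum_piFinset_succ]
    refine sum_congr rfl fun y _ => ?_
    rw [ih (Fin.tail F) (Fin.tail t) (fun i => ht i.succ), mul_sum]
    refine sum_congr rfl fun h _ => ?_
    simp [List.ofFn_succ, Fin.prod_univ_succ, Fin.tail, eq_inv_mul_iff_mul_eq, mul_ite]

lemma Complex.ofReal_groupConvProd [DecidableEq Γ] {n : ℕ} (F : Fin n → Γ → ℝ) (γ : Γ) :
    ((groupConvProd n F γ : ℝ) : ℂ) = groupConvProd n (fun i γ => (F i γ : ℂ)) γ := by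
  induction n generalizing γ with
  | zero => by_cases h : γ = 1 <;> simp [groupConvProd, h]
  | succ n ih =>
    simp only [groupConvProd, groupConv, Complex.ofReal_tsum, Complex.ofReal_mul, ih]
    rfl

end Convolution

section WeightedNorm

variable {Γ : Type*}

noncomputable def weightedL2Norm (ℓ : Γ → ℝ) (m : ℕ) (f : Γ → ℂ) : ℝ :=
  √(∑' γ, (1 + ℓ γ) ^ (2 * m) * ‖f γ‖ ^ 2)

noncomputable def normWeight (ℓ : Γ → ℝ) (a : ℕ) (f : Γ → ℂ) (γ : Γ) : ℝ := ‖f γ‖ * (1 + ℓ γ) ^ a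

variable (ℓ : Γ → ℝ)

lemma weightedL2Norm_nonneg (m : ℕ) (f : Γ → ℂ) : 0 ≤ weightedL2Norm ℓ m f :=
  Real.sqrt_nonneg _

lemma weightedL2Norm_zero_single_one [One Γ] [DecidableEq Γ] :
    weightedL2Norm ℓ 0 (Pi.single 1 1) = 1 := by
  have h : ∀ γ : Γ, ‖(Pi.single 1 1 : Γ → ℂ) γ‖ ^ 2 = if γ = 1 then 1 else 0 := fun γ => by
    by_cases hγ : γ = 1 <;> simp [hγ]
  simp [weightedL2Norm, h]

lemma sqrt_sum_sq_le_weightedL2Norm_zero {p : Γ → ℝ} (hp : (support p).Finite) (s : Finset Γ) :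
    √(∑ γ ∈ s, p γ ^ 2) ≤ weightedL2Norm ℓ 0 (fun γ => (p γ : ℂ)) := by
  unfold weightedL2Norm
  refine Real.sqrt_le_sqrt ?_
  simp only [mul_zero, pow_zero, one_mul, Complex.norm_real, Real.norm_eq_abs, sq_abs]
  exact Summable.sum_le_tsum s (fun γ _ => sq_nonneg _)
    (summable_of_hasFiniteSupport (hp.subset fun γ hγ => by simpa using hγ))

lemma weightedL2Norm_zero_comp_inv [Group Γ] (f : Γ → ℂ) :
    weightedL2Norm ℓ 0 (fun γ => f γ⁻¹) = weightedL2Norm ℓ 0 f := by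
  simp only [weightedL2Norm, mul_zero, pow_zero, one_mul]
  congr 1
  exact (Equiv.inv Γ).tsum_eq fun γ => ‖f γ‖ ^ 2

lemma sum_mul_inv_le_weightedL2Norm_zero_mul [Group Γ] {p q : Γ → ℝ} (hp : (support p).Finite)
    (hq : (support q).Finite) (s : Finset Γ) :
    ∑ y ∈ s, p y * q y⁻¹ ≤
      weightedL2Norm ℓ 0 (fun γ => (p γ : ℂ)) * weightedL2Norm ℓ 0 (fun γ => (q γ : ℂ)) := by
  have hq' : (support fun γ => q γ⁻¹).Finite := hq.preimage inv_injective.injOn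
  calc ∑ y ∈ s, p y * q y⁻¹ ≤ √(∑ y ∈ s, p y ^ 2) * √(∑ y ∈ s, q y⁻¹ ^ 2) :=
        Real.sum_mul_le_sqrt_mul_sqrt s p fun y => q y⁻¹
    _ ≤ _ := by
        rw [← weightedL2Norm_zero_comp_inv ℓ fun γ => (q γ : ℂ)]
        exact mul_le_mul (sqrt_sum_sq_le_weightedL2Norm_zero ℓ hp s)
          (sqrt_sum_sq_le_weightedL2Norm_zero ℓ hq' s) (Real.sqrt_nonneg _)
          (weightedL2Norm_nonneg ℓ 0 _)

lemma support_normWeight_subset (a : ℕ) (f : Γ → ℂ) : support (normWeight ℓ a f) ⊆ support f :=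
  fun γ hγ hf => hγ (by simp [normWeight, hf])

lemma weightedL2Norm_normWeight (m a : ℕ) (f : Γ → ℂ) :
    weightedL2Norm ℓ m (fun γ => (normWeight ℓ a f γ : ℂ)) = weightedL2Norm ℓ (m + a) f := by
  unfold weightedL2Norm normWeight
  congr 1
  refine tsum_congr fun γ => ?_
  rw [Complex.norm_real, Real.norm_eq_abs, sq_abs]
  ring

end WeightedNorm

section Haagerup

variable {Γ : Type*} [Group Γ] [DecidableEq Γ] {ℓ : Γ → ℝ} {N : ℕ} {C' : ℝ}

def HaagerupInequality (ℓ : Γ → ℝ) (N : ℕ) (C' : ℝ) : Prop :=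
  ∀ f g : Γ → ℂ, (support f).Finite → (support g).Finite →
    weightedL2Norm ℓ 0 (groupConv f g) ≤ C' * weightedL2Norm ℓ N f * weightedL2Norm ℓ 0 g

lemma HaagerupInequality.weightedL2Norm_groupConvProd_le
    (hH : HaagerupInequality ℓ N C') (hC' : 0 ≤ C') {n : ℕ} (F : Fin n → Γ → ℂ)
    (hF : ∀ i, (support (F i)).Finite) :
    weightedL2Norm ℓ 0 (groupConvProd n F) ≤ C' ^ n * ∏ i, weightedL2Norm ℓ N (F i) := by
  induction n with
  | zero => simp [groupConvProd, weightedL2Norm_zero_single_one ℓ]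
  | succ n ih =>
    calc weightedL2Norm ℓ 0 (groupConvProd (n + 1) F)
        ≤ C' * weightedL2Norm ℓ N (F 0) * weightedL2Norm ℓ 0 (groupConvProd n (Fin.tail F)) :=
          hH _ _ (hF 0) (support_groupConvProd_finite fun i => hF i.succ)
      _ ≤ C' * weightedL2Norm ℓ N (F 0) * (C' ^ n * ∏ i : Fin n, weightedL2Norm ℓ N (F i.succ)) :=
          mul_le_mul_of_nonneg_left (ih _ fun i => hF i.succ)
            (mul_nonneg hC' (weightedL2Norm_nonneg ℓ N _))
      _ = C' ^ (n + 1) * ∏ i, weightedL2Norm ℓ N (F i) := by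
          rw [Fin.prod_univ_succ, pow_succ]
          ring

lemma HaagerupInequality.sum_mul_groupConvProd_inv_le (hH : HaagerupInequality ℓ N C')
    (hC' : 0 ≤ C') {p : Γ → ℝ} (hp : (support p).Finite) {n : ℕ} {F : Fin n → Γ → ℝ}
    (hF : ∀ i, (support (F i)).Finite) (s : Finset Γ) :
    ∑ y ∈ s, p y * groupConvProd n F y⁻¹ ≤ weightedL2Norm ℓ 0 (fun γ => (p γ : ℂ)) *
      (C' ^ n * ∏ i, weightedL2Norm ℓ N (fun γ => (F i γ : ℂ))) := by
  have hFℂ : ∀ i, (support fun γ => (F i γ : ℂ)).Finite := fun i => by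
    rw [show (support fun γ => (F i γ : ℂ)) = support (F i) from
      support_comp_eq _ Complex.ofReal_eq_zero _]
    exact hF i
  calc _ ≤ weightedL2Norm ℓ 0 (fun γ => (p γ : ℂ)) *
        weightedL2Norm ℓ 0 (fun γ => ((groupConvProd n F γ : ℝ) : ℂ)) :=
        sum_mul_inv_le_weightedL2Norm_zero_mul ℓ hp (q := groupConvProd n F)
          (support_groupConvProd_finite hF) s
    _ = weightedL2Norm ℓ 0 (fun γ => (p γ : ℂ)) *
        weightedL2Norm ℓ 0 (groupConvProd n fun i γ => (F i γ : ℂ)) := by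
        simp only [Complex.ofReal_groupConvProd]
    _ ≤ _ := mul_le_mul_of_nonneg_left
        (hH.weightedL2Norm_groupConvProd_le hC' (fun i γ => (F i γ : ℂ)) hFℂ)
        (weightedL2Norm_nonneg ℓ 0 _)

end Haagerup

section CocycleSum

variable {Γ : Type*} {ℓ : Γ → ℝ} {k : ℕ} {C : ℝ} {a : Fin k → ℕ} {c : (Fin k → Γ) → ℂ}
  {w : (Fin (k + 1) → Γ) → ℂ}

lemma norm_prod_mul_mul_le_prod_normWeight
    (hc : ∀ g : Fin k → Γ, ‖c g‖ ≤ C * ∏ i, (1 + ℓ (g i)) ^ a i) (hw : ∀ g, ‖w g‖ ≤ 1)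
    (f : Fin (k + 1) → Γ → ℂ) (g : Fin (k + 1) → Γ) :
    ‖(∏ i, f i (g i)) * c (Fin.tail g) * w g‖ ≤
      C * ∏ i, normWeight ℓ ((Fin.cons 0 a : Fin (k + 1) → ℕ) i) (f i) (g i) := by
  have hweight : ∏ i, normWeight ℓ ((Fin.cons 0 a : Fin (k + 1) → ℕ) i) (f i) (g i) =
      (∏ i, ‖f i (g i)‖) * ∏ j, (1 + ℓ (g j.succ)) ^ a j := by
    simp [normWeight, prod_mul_distrib, Fin.prod_univ_succ (n := k) fun i => (1 + ℓ (g i)) ^ _]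
  have hprod : 0 ≤ ∏ i, ‖f i (g i)‖ := prod_nonneg fun i _ => norm_nonneg _
  rw [hweight, norm_mul, norm_mul, norm_prod]
  calc _ ≤ (∏ i, ‖f i (g i)‖) * (C * ∏ j, (1 + ℓ (g j.succ)) ^ a j) * 1 :=
        mul_le_mul (mul_le_mul_of_nonneg_left (hc _) hprod) (hw g) (norm_nonneg _)
          (mul_nonneg hprod ((norm_nonneg _).trans (hc _)))
    _ = _ := by ring

lemma norm_tsum_cocycle_le_sum_prod_normWeight [Group Γ] [DecidableEq Γ]
    (hc : ∀ g : Fin k → Γ, ‖c g‖ ≤ C * ∏ i, (1 + ℓ (g i)) ^ a i) (hw : ∀ g, ‖w g‖ ≤ 1)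
    (f : Fin (k + 1) → Γ → ℂ) (t : Fin (k + 1) → Finset Γ) (ht : ∀ i, support (f i) ⊆ t i) :
    ‖∑' g : Fin (k + 1) → Γ,
        if (List.ofFn g).prod = 1 then (∏ i, f i (g i)) * c (Fin.tail g) * w g else 0‖ ≤
      C * ∑ g ∈ Fintype.piFinset t, if (List.ofFn g).prod = 1 then
        ∏ i, normWeight ℓ ((Fin.cons 0 a : Fin (k + 1) → ℕ) i) (f i) (g i) else 0 := by
  have hvanish : ∀ g ∉ Fintype.piFinset t,
      (if (List.ofFn g).prod = 1 then (∏ i, f i (g i)) * c (Fin.tail g) * w g else 0) = 0 := by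
    intro g hg
    obtain ⟨i, hi⟩ := not_forall.mp (Fintype.mem_piFinset.not.mp hg)
    have hfi : f i (g i) = 0 := notMem_support.mp fun h => hi (ht i h)
    simp [prod_eq_zero (f := fun i => f i (g i)) (mem_univ i) hfi]
  rw [tsum_eq_sum hvanish, mul_sum]
  refine (norm_sum_le _ _).trans (sum_le_sum fun g _ => ?_)
  split_ifs
  · exact norm_prod_mul_mul_le_prod_normWeight hc hw f g
  · simp

end CocycleSum

theorem cyclic_cocycle_haagerup_estimate_general {Γ : Type*} [Group Γ] [DecidableEq Γ] (k : ℕ)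
    (ℓ : Γ → ℝ)
    (ν : ℕ → (Γ → ℂ) → ℝ)
    (hνdef : ∀ (m : ℕ) (f : Γ → ℂ),
      ν m f = Real.sqrt (∑' γ : Γ, (1 + ℓ γ) ^ (2 * m) * ‖f γ‖ ^ 2))
    (N : ℕ) (C' : ℝ) (hC' : 0 < C')
    (hHaagerup : ∀ f g : Γ → ℂ, (Function.support f).Finite →
      (Function.support g).Finite →
      ν 0 (fun γ => ∑' γ₁ : Γ, f γ₁ * g (γ₁⁻¹ * γ)) ≤ C' * ν N f * ν 0 g)
    (C : ℝ) (hC : 0 < C) (a : Fin k → ℕ)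
    (c : (Fin k → Γ) → ℂ)
    (hc : ∀ g : Fin k → Γ, ‖c g‖ ≤ C * ∏ i : Fin k, (1 + ℓ (g i)) ^ (a i))
    (w : (Fin (k + 1) → Γ) → ℂ) (hw : ∀ g : Fin (k + 1) → Γ, ‖w g‖ ≤ 1)
    (f : Fin (k + 1) → Γ → ℂ) (hf : ∀ i, (Function.support (f i)).Finite) :
    ‖(∑' g : Fin (k + 1) → Γ,
        if (List.ofFn g).prod = 1 then
          (∏ i : Fin (k + 1), f i (g i)) * c (fun j : Fin k => g j.succ) * w g
        else 0)‖
      ≤ C * C' ^ k * ν 0 (f 0) * ∏ j : Fin k, ν (N + a j) (f j.succ) := by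
  obtain rfl : ν = weightedL2Norm ℓ := funext fun m => funext (hνdef m)
  have hH : HaagerupInequality ℓ N C' := hHaagerup
  set F : Fin (k + 1) → Γ → ℝ :=
    fun i => normWeight ℓ ((Fin.cons 0 a : Fin (k + 1) → ℕ) i) (f i)
  set t : Fin (k + 1) → Finset Γ := fun i => (hf i).toFinset
  have ht : ∀ i, support (f i) ⊆ t i := fun i => by simp [t]
  have hFt : ∀ i, support (F i) ⊆ t i := fun i => (support_normWeight_subset ℓ _ _).trans (ht i)
  have hF : ∀ i, (support (F i)).Finite :=
    fun i => (hf i).subset (support_normWeight_subset ℓ _ _)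
  calc _ ≤ C * ∑ g ∈ Fintype.piFinset t, if (List.ofFn g).prod = 1 then ∏ i, F i (g i) else 0 :=
        norm_tsum_cocycle_le_sum_prod_normWeight hc hw f t ht
    _ = C * ∑ y ∈ t 0, F 0 y * groupConvProd k (Fin.tail F) y⁻¹ := by
        rw [← groupConvProd_eq_sum F t hFt, groupConvProd, groupConv_eq_sum _ (hFt 0)]
        simp only [mul_one]
    _ ≤ C * (weightedL2Norm ℓ 0 (fun γ => (F 0 γ : ℂ)) *
          (C' ^ k * ∏ j : Fin k, weightedL2Norm ℓ N (fun γ => (F j.succ γ : ℂ)))) :=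
        mul_le_mul_of_nonneg_left
          (hH.sum_mul_groupConvProd_inv_le hC'.le (hF 0) (F := Fin.tail F)
            (fun j => hF j.succ) (t 0)) hC.le
    _ = _ := by
        simp only [F, weightedL2Norm_normWeight, Fin.cons_zero, Fin.cons_succ]
        ring

/-- **Continuity of cyclic cocycles under the Haagerup inequality** (abstract form of
Lemma `taucforrd`). Assume `Γ` satisfies the Haagerup inequality with constants `N, C'`
for the weighted norms `ν_m(f) = (Σ_γ (1+ℓ(γ))^{2m} |f(γ)|²)^{1/2}`, `c : Γ^k → ℂ` is
polynomially bounded, and `|w| ≤ 1`. Then for all finitely supported `f₀, …, f_k`,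
`|Σ_{γ₀⋯γ_k = e} f₀(γ₀)⋯f_k(γ_k) c(γ₁,…,γ_k) w(γ₀,…,γ_k)|
   ≤ C (C')^k ν₀(f₀) ν_{N+a₁}(f₁) ⋯ ν_{N+a_k}(f_k)`. -/
theorem cyclic_cocycle_haagerup_estimate {Γ : Type*} [Group Γ] [DecidableEq Γ] (k : ℕ) (hk : 1 ≤ k)
    (ℓ : Γ → ℝ) (hℓ0 : ∀ γ : Γ, 0 ≤ ℓ γ) (hℓinv : ∀ γ : Γ, ℓ γ⁻¹ = ℓ γ)
    (ν : ℕ → (Γ → ℂ) → ℝ)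
    (hνdef : ∀ (m : ℕ) (f : Γ → ℂ),
      ν m f = Real.sqrt (∑' γ : Γ, (1 + ℓ γ) ^ (2 * m) * ‖f γ‖ ^ 2))
    (N : ℕ) (C' : ℝ) (hC' : 0 < C')
    (hHaagerup : ∀ f g : Γ → ℂ, (Function.support f).Finite →
      (Function.support g).Finite →
      ν 0 (fun γ => ∑' γ₁ : Γ, f γ₁ * g (γ₁⁻¹ * γ)) ≤ C' * ν N f * ν 0 g)
    (C : ℝ) (hC : 0 < C) (a : Fin k → ℕ)
    (c : (Fin k → Γ) → ℂ)
    (hc : ∀ g : Fin k → Γ, ‖c g‖ ≤ C * ∏ i : Fin k, (1 + ℓ (g i)) ^ (a i))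
    (w : (Fin (k + 1) → Γ) → ℂ) (hw : ∀ g : Fin (k + 1) → Γ, ‖w g‖ ≤ 1)
    (f : Fin (k + 1) → Γ → ℂ) (hf : ∀ i, (Function.support (f i)).Finite) :
    ‖(∑' g : Fin (k + 1) → Γ,
        if (List.ofFn g).prod = 1 then
          (∏ i : Fin (k + 1), f i (g i)) * c (fun j : Fin k => g j.succ) * w g
        else 0)‖
      ≤ C * C' ^ k * ν 0 (f 0) * ∏ j : Fin k, ν (N + a j) (f j.succ) :=
  cyclic_cocycle_haagerup_estimate_general k ℓ ν hνdef N C' hC' hHaagerup C hC a c hc w hw f hf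
end

section
/- Let k ≥ 1 be an integer and for each l = 0, 1, …, k let α^l : ℕ × ℕ → ℝ be a finitely supported family of nonnegative real numbers. Then Σ_{i₀, i₁, …, i_k ∈ ℕ} α⁰_{i₀ i₁}·α¹_{i₁ i₂}·…·α^{k−1}_{i_{k−1} i_k}·α^k_{i_k i₀} ≤ Π_{l=0}^{k} (Σ_{i,j ∈ ℕ} (α^l_{ij})²)^{1/2}. -/
/-!
Restricting all indices to a finite set `s` that carries the supports turns the families `α^l`
into real `s × s` matrices `A_l`: the left-hand side is `tr (A_0 A_1 ⋯ A_k)` and the right-hand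
side is `∏ ‖A_l‖` for the Frobenius norm. By Cauchy–Schwarz, `tr (A B) ≤ ‖A‖ ‖B‖`, and the
Frobenius norm is submultiplicative, so
`tr (A_0 (A_1 ⋯ A_k)) ≤ ‖A_0‖ ‖A_1 ⋯ A_k‖ ≤ ‖A_0‖ ‖A_1‖ ⋯ ‖A_k‖`.
-/

open scoped Matrix.Norms.Frobenius

theorem Fin.sum_pi_succ {β M : Type*} [Fintype β] [AddCommMonoid M] {k : ℕ}
    (f : (Fin (k + 1) → β) → M) : ∑ i, f i = ∑ a, ∑ i : Fin k → β, f (Fin.cons a i) := by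
  rw [← (Fin.consEquiv fun _ => β).sum_comp, Fintype.sum_prod_type]
  rfl

theorem Fin.cons_add_one_eq_snoc {β : Type*} {k : ℕ} (a : β) (i : Fin k → β) (l : Fin (k + 1)) :
    (Fin.cons a i : Fin (k + 1) → β) (l + 1) = (Fin.snoc i a : Fin (k + 1) → β) l := by
  induction l using Fin.lastCases with
  | last => simp
  | cast m => simp [Fin.coeSucc_eq_succ]

namespace Matrix

variable {n R : Type*} [Fintype n]

theorem frobenius_norm_eq_sqrt {m : Type*} [Fintype m] (A : Matrix m n ℝ) :
    ‖A‖ = √(∑ p : m × n, A p.1 p.2 ^ 2) := by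
  rw [frobenius_norm_def, Real.sqrt_eq_rpow, Fintype.sum_prod_type]
  simp

theorem trace_mul_le_frobenius_norm_mul (A B : Matrix n n ℝ) : trace (A * B) ≤ ‖A‖ * ‖B‖ := by
  have h := Real.sum_mul_le_sqrt_mul_sqrt Finset.univ (fun p : n × n => A p.1 p.2)
    (fun p => Bᵀ p.1 p.2)
  rw [← frobenius_norm_eq_sqrt, ← frobenius_norm_eq_sqrt, frobenius_norm_transpose,
    ← Finset.univ_product_univ, Finset.sum_product] at h
  simpa [trace, mul_apply] using h

variable [DecidableEq n]

theorem list_ofFn_prod_apply [CommSemiring R] {k : ℕ} (A : Fin (k + 1) → Matrix n n R) (a b : n) :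
    (List.ofFn A).prod a b =
      ∑ i : Fin k → n, ∏ l,
        A l ((Fin.cons a i : Fin (k + 1) → n) l) ((Fin.snoc i b : Fin (k + 1) → n) l) := by
  induction k generalizing a with
  | zero => simp [Fin.snoc]
  | succ k ih =>
    rw [List.ofFn_succ, List.prod_cons, mul_apply, Fin.sum_pi_succ]
    refine Finset.sum_congr rfl fun m _ => ?_
    rw [ih, Finset.mul_sum]
    refine Finset.sum_congr rfl fun i _ => ?_
    rw [← Fin.cons_snoc_eq_snoc_cons, Fin.prod_univ_succ (n := k + 1)]
    simp only [Fin.cons_zero, Fin.cons_succ]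

theorem trace_list_ofFn_prod [CommSemiring R] {k : ℕ} (A : Fin (k + 1) → Matrix n n R) :
    trace (List.ofFn A).prod = ∑ i : Fin (k + 1) → n, ∏ l, A l (i l) (i (l + 1)) := by
  simp_rw [trace, diag, list_ofFn_prod_apply, Fin.sum_pi_succ, Fin.cons_add_one_eq_snoc]

theorem trace_list_prod_le_prod_frobenius_norm {L : List (Matrix n n ℝ)}
    (hL : 2 ≤ L.length) : trace L.prod ≤ (L.map norm).prod := by
  obtain ⟨A, L, rfl⟩ := L.exists_cons_of_ne_nil (List.ne_nil_of_length_pos (by omega))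
  have hL : L ≠ [] := List.ne_nil_of_length_pos (by simp only [List.length_cons] at hL; omega)
  rw [List.prod_cons, List.map_cons, List.prod_cons]
  exact (trace_mul_le_frobenius_norm_mul A L.prod).trans
    (mul_le_mul_of_nonneg_left (List.norm_prod_le' hL) (norm_nonneg A))

end Matrix

open Function in
theorem exists_finset_forall_ne_zero_mem {ι β R : Type*} [Finite ι] [Zero R] (f : ι → β → β → R)
    (hf : ∀ l, (support fun p : β × β => f l p.1 p.2).Finite) :
    ∃ s : Finset β, ∀ l i j, f l i j ≠ 0 → i ∈ s ∧ j ∈ s := by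
  classical
  have hU : (⋃ l, support fun p : β × β => f l p.1 p.2).Finite := Set.finite_iUnion hf
  refine ⟨hU.toFinset.image Prod.fst ∪ hU.toFinset.image Prod.snd, fun l i j h => ?_⟩
  have hij : (i, j) ∈ hU.toFinset := hU.mem_toFinset.2 (Set.mem_iUnion.2 ⟨l, h⟩)
  exact ⟨Finset.mem_union_left _ (Finset.mem_image_of_mem _ hij),
    Finset.mem_union_right _ (Finset.mem_image_of_mem _ hij)⟩

section TsumSubtype

variable {M : Type*} [AddCommMonoid M] [TopologicalSpace M]

theorem tsum_pi_eq_sum_subtype {ι β : Type*} [Fintype ι] [DecidableEq ι] {s : Finset β}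
    {f : (ι → β) → M} (hf : ∀ i, f i ≠ 0 → ∀ l, i l ∈ s) :
    ∑' i, f i = ∑ j : ι → s, f fun l => j l := by
  refine (Subtype.val_injective.comp_left.tsum_eq fun i hi => ?_).symm.trans (tsum_fintype _)
  exact ⟨fun l => ⟨i l, hf i hi l⟩, rfl⟩

theorem tsum_prod_eq_sum_subtype {β γ : Type*} {s : Finset β} {t : Finset γ} {f : β × γ → M}
    (hf : ∀ p, f p ≠ 0 → p.1 ∈ s ∧ p.2 ∈ t) :
    ∑' p, f p = ∑ p : s × t, f (p.1, p.2) := by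
  refine ((Subtype.val_injective.prodMap Subtype.val_injective).tsum_eq fun p hp => ?_).symm.trans
    (tsum_fintype _)
  exact ⟨(⟨p.1, (hf p hp).1⟩, ⟨p.2, (hf p hp).2⟩), rfl⟩

end TsumSubtype

theorem cyclic_product_hilbert_schmidt_general (k : ℕ) (hk : 1 ≤ k)
    (α : Fin (k + 1) → ℕ → ℕ → ℝ)
    (hfin : ∀ l : Fin (k + 1), (Function.support fun p : ℕ × ℕ => α l p.1 p.2).Finite) :
    (∑' i : Fin (k + 1) → ℕ, ∏ l : Fin (k + 1), α l (i l) (i (l + 1)))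
      ≤ ∏ l : Fin (k + 1), Real.sqrt (∑' p : ℕ × ℕ, (α l p.1 p.2) ^ 2) := by
  obtain ⟨s, hs⟩ := exists_finset_forall_ne_zero_mem α hfin
  let A : Fin (k + 1) → Matrix s s ℝ := fun l => Matrix.of fun a b => α l a b
  have hnorm (l : Fin (k + 1)) : √(∑' p : ℕ × ℕ, α l p.1 p.2 ^ 2) = ‖A l‖ := by
    rw [Matrix.frobenius_norm_eq_sqrt]
    exact congrArg _ <| tsum_prod_eq_sum_subtype fun p hp =>
      hs l _ _ ((pow_ne_zero_iff two_ne_zero).1 hp)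
  have hlength : 2 ≤ (List.ofFn A).length := by simp only [List.length_ofFn]; omega
  calc _ = ∑ j : Fin (k + 1) → s, ∏ l, A l (j l) (j (l + 1)) :=
        tsum_pi_eq_sum_subtype fun i hi l =>
          (hs l _ _ (Finset.prod_ne_zero_iff.1 hi l (Finset.mem_univ l))).1
    _ = (List.ofFn A).prod.trace := (Matrix.trace_list_ofFn_prod A).symm
    _ ≤ ((List.ofFn A).map norm).prod := Matrix.trace_list_prod_le_prod_frobenius_norm hlength
    _ = _ := by simp only [List.map_ofFn, List.prod_ofFn, Function.comp_def, hnorm]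

/-- **Trace–Hilbert–Schmidt inequality for cyclic products of nonnegative matrices.**
For finitely supported families of nonnegative reals `α^l : ℕ × ℕ → ℝ`, `l = 0, …, k`,
`Σ_{i₀,…,i_k} α⁰_{i₀i₁} α¹_{i₁i₂} ⋯ α^k_{i_k i₀} ≤ Π_l (Σ_{i,j} (α^l_{ij})²)^{1/2}`. -/
theorem cyclic_product_hilbert_schmidt (k : ℕ) (hk : 1 ≤ k)
    (α : Fin (k + 1) → ℕ → ℕ → ℝ)
    (hnonneg : ∀ (l : Fin (k + 1)) (i j : ℕ), 0 ≤ α l i j)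
    (hfin : ∀ l : Fin (k + 1), (Function.support fun p : ℕ × ℕ => α l p.1 p.2).Finite) :
    (∑' i : Fin (k + 1) → ℕ, ∏ l : Fin (k + 1), α l (i l) (i (l + 1)))
      ≤ ∏ l : Fin (k + 1), Real.sqrt (∑' p : ℕ × ℕ, (α l p.1 p.2) ^ 2) :=
  cyclic_product_hilbert_schmidt_general k hk α hfin
end
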